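/- arXiv:2002.06694 — 4 statements merged into one kernel-verified Lean document; each statement's English description precedes it below -/
import Mathlib

section
/- Under the Stochastic Ball Model, if η_min ≥ 6√k, then the tuple of true centers β* = (β*_1, …, β*_k) is a global minimum of the population k-means objective G, and every global minimum β of G satisfies β_i = β*_{π(i)} for all i ∈ [k] for some permutation π of [k]; i.e., β* is the unique global minimum up to permutation of its components. -/
open MeasureTheory Metric Set

noncomputable section

/-- Density of the uniform distribution on the closed ball of center `c` and radius `r`
in `ℝ^d`. -/
def unifBallDensity (d : ℕ) (c : EuclideanSpace ℝ (Fin d)) (r : ℝ)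
    (x : EuclideanSpace ℝ (Fin d)) : ℝ :=
  (Metric.closedBall c r).indicator
    (fun _ => ((volume (Metric.closedBall c r)).toReal)⁻¹) x

/-- Mixture density of the Stochastic Ball Model with true centers `βstar` and radius `r`. -/
def ballMixDensity (d k : ℕ) (βstar : Fin k → EuclideanSpace ℝ (Fin d)) (r : ℝ)
    (x : EuclideanSpace ℝ (Fin d)) : ℝ :=
  (1 / (k : ℝ)) * ∑ s : Fin k, unifBallDensity d (βstar s) r x

/-- Population k-means objective with data density `f`. -/
def kmeansObj (d k : ℕ) (f : EuclideanSpace ℝ (Fin d) → ℝ)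
    (β : Fin k → EuclideanSpace ℝ (Fin d)) : ℝ :=
  ∫ x, (⨅ j : Fin k, ‖x - β j‖ ^ 2) * f x

/-- Minimum pairwise distance among the true centers. -/
def Deltamin (d k : ℕ) (βstar : Fin k → EuclideanSpace ℝ (Fin d)) : ℝ :=
  sInf {y : ℝ | ∃ s s' : Fin k, s ≠ s' ∧ y = dist (βstar s) (βstar s')}

/-!
Write `m = ∫_{B(0,r)} ‖x‖²` and `V = vol B(0,r)`. Translating a ball to the origin, the cross
term `⟪x, b - c⟫` integrates to zero by symmetry, so `∫_{B(c,r)} ‖x - b‖² = m + V ‖b - c‖²`.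
If every ball `B_s` has some center `β_j` within `(1 + √k) r` of `β*_s`, the separation
`Δ_min ≥ 6 √k r` forces these centers to be distinct and each to be the nearest center on its
whole ball, so `G β = m / V + k⁻¹ ∑ₛ ‖β_{σ s} - β*_s‖²` for a permutation `σ`; in particular
`G β* = m / V`. Otherwise some ball stays at distance `≥ √k r` from every center, and that ball
alone contributes `r² > m / V` to `G`.
-/

theorem continuous_ciInf_of_finite {X ι α : Type*} [TopologicalSpace X]
    [ConditionallyCompleteLattice α] [TopologicalSpace α] [ContinuousInf α] [Finite ι] [Nonempty ι]
    {f : ι → X → α} (hf : ∀ i, Continuous (f i)) : Continuous fun x => ⨅ i, f i x := by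
  cases nonempty_fintype ι
  simp_rw [← Finset.inf'_univ_eq_ciInf]
  exact Continuous.finset_inf'_apply Finset.univ_nonempty fun i _ => hf i

theorem measureReal_closedBall_pos {X : Type*} [PseudoMetricSpace X] [ProperSpace X]
    [MeasurableSpace X] (μ : Measure X) [μ.IsOpenPosMeasure] [IsFiniteMeasureOnCompacts μ] (x : X)
    {r : ℝ} (hr : 0 < r) : 0 < μ.real (closedBall x r) :=
  ENNReal.toReal_pos (measure_closedBall_pos μ x hr).ne' measure_closedBall_lt_top.ne

section HaarBall

variable {E : Type*} [NormedAddCommGroup E] [InnerProductSpace ℝ E] [FiniteDimensional ℝ E]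
  [MeasurableSpace E] [BorelSpace E] (μ : Measure E) [μ.IsAddHaarMeasure]

theorem setIntegral_closedBall_zero_inner_eq_zero (r : ℝ) (w : E) :
    ∫ x in closedBall (0 : E) r, inner ℝ x w ∂μ = 0 := by
  have hsymm := (Measure.measurePreserving_neg μ).setIntegral_preimage_emb
    (Homeomorph.neg E).measurableEmbedding (fun x => inner ℝ x w) (closedBall 0 r)
  simp only [Set.neg_preimage, neg_closedBall, neg_zero, inner_neg_left, integral_neg] at hsymm
  linarith

theorem setIntegral_closedBall_norm_sub_sq (c b : E) (r : ℝ) :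
    ∫ x in closedBall c r, ‖x - b‖ ^ 2 ∂μ =
      ∫ x in closedBall (0 : E) r, ‖x‖ ^ 2 ∂μ + μ.real (closedBall (0 : E) r) * ‖b - c‖ ^ 2 := by
  have htrans := (measurePreserving_add_right μ c).setIntegral_preimage_emb
    (measurableEmbedding_addRight c) (fun x => ‖x - b‖ ^ 2) (closedBall c r)
  have hpre : (fun x => x + c) ⁻¹' closedBall c r = closedBall 0 r := by
    ext x; simp [dist_eq_norm]
  have hexpand : ∀ x : E, ‖x + c - b‖ ^ 2 = ‖x‖ ^ 2 - 2 * inner ℝ x (b - c) + ‖b - c‖ ^ 2 := by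
    intro x
    rw [← norm_sub_sq_real, sub_sub_eq_add_sub]
  have hsq : IntegrableOn (fun x : E => ‖x‖ ^ 2) (closedBall 0 r) μ :=
    (by fun_prop : Continuous fun x : E => ‖x‖ ^ 2).continuousOn.integrableOn_compact
      (isCompact_closedBall 0 r)
  have hinner : IntegrableOn (fun x : E => 2 * inner ℝ x (b - c)) (closedBall 0 r) μ :=
    (by fun_prop : Continuous fun x : E => 2 * inner ℝ x (b - c)).continuousOn.integrableOn_compact
      (isCompact_closedBall 0 r)
  have hdiff : IntegrableOn (fun x : E => ‖x‖ ^ 2 - 2 * inner ℝ x (b - c)) (closedBall 0 r) μ :=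
    hsq.sub hinner
  rw [← htrans, hpre]
  simp_rw [hexpand]
  rw [integral_add hdiff (integrableOn_const measure_closedBall_lt_top.ne),
    integral_sub hsq hinner, integral_const_mul, setIntegral_closedBall_zero_inner_eq_zero,
    setIntegral_const, smul_eq_mul]
  ring

theorem setIntegral_closedBall_zero_norm_sq_lt {r : ℝ} (hr : 0 < r) :
    ∫ x in closedBall (0 : E) r, ‖x‖ ^ 2 ∂μ < μ.real (closedBall (0 : E) r) * r ^ 2 := by
  have hint : IntegrableOn (fun x : E => ‖x‖ ^ 2) (closedBall 0 r) μ :=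
    (by fun_prop : Continuous fun x : E => ‖x‖ ^ 2).continuousOn.integrableOn_compact
      (isCompact_closedBall 0 r)
  have hgap : 0 < ∫ x in closedBall (0 : E) r, (r ^ 2 - ‖x‖ ^ 2) ∂μ := by
    rw [setIntegral_pos_iff_support_of_nonneg_ae]
    · refine (measure_ball_pos μ 0 hr).trans_le
        (measure_mono fun x hx => ⟨?_, ball_subset_closedBall hx⟩)
      rw [mem_ball_zero_iff] at hx
      simp only [Function.mem_support]
      nlinarith [norm_nonneg x]
    · refine (ae_restrict_iff' measurableSet_closedBall).2 (ae_of_all _ fun x hx => ?_)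
      rw [mem_closedBall_zero_iff] at hx
      simp only [Pi.zero_apply, sub_nonneg]
      gcongr
    · exact (integrableOn_const measure_closedBall_lt_top.ne).sub hint
  rw [integral_sub (integrableOn_const measure_closedBall_lt_top.ne (C := r ^ 2)) hint,
    setIntegral_const, smul_eq_mul] at hgap
  linarith

end HaarBall

section Separated

variable {X ι : Type*} [PseudoMetricSpace X]

theorem dist_le_dist_of_separated {x b b' c c' : X} {r ρ : ℝ} (hx : dist x c ≤ r)
    (hb : dist b c ≤ r + ρ) (hb' : dist b' c' ≤ r + ρ) (hcc' : 4 * r + 2 * ρ ≤ dist c c') :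
    dist x b ≤ dist x b' := by
  linarith [dist_triangle_right x b c, dist_triangle4 c x b' c', dist_comm c x]

theorem exists_perm_forall_dist_le_of_separated [Finite ι] {c b : ι → X} {r ρ : ℝ} (hr : 0 < r)
    (hsep : Pairwise fun s s' => 4 * r + 2 * ρ ≤ dist (c s) (c s'))
    (hnear : ∀ s, ∃ j, dist (b j) (c s) ≤ r + ρ) :
    ∃ σ : Equiv.Perm ι, ∀ s, ∀ x ∈ closedBall (c s) r, ∀ j, dist x (b (σ s)) ≤ dist x (b j) := by
  choose φ hφ using hnear
  have hφinj : φ.Injective := fun s s' hss' => by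
    by_contra hne
    have := dist_triangle_left (c s) (c s') (b (φ s'))
    linarith [hsep hne, hss' ▸ hφ s, hφ s']
  have hφbij := Finite.injective_iff_bijective.mp hφinj
  refine ⟨Equiv.ofBijective φ hφbij, fun s x hx j => ?_⟩
  obtain ⟨s', rfl⟩ := hφbij.2 j
  rcases eq_or_ne s s' with rfl | hne
  · exact le_rfl
  · exact dist_le_dist_of_separated hx (hφ s) (hφ s') (hsep hne)

end Separated

section BallModel

variable {d k : ℕ}

local notation "E" => EuclideanSpace ℝ (Fin d)

theorem Deltamin_le_dist (βstar : Fin k → E) {s s' : Fin k} (h : s ≠ s') :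
    Deltamin d k βstar ≤ dist (βstar s) (βstar s') :=
  csInf_le ⟨0, by rintro _ ⟨_, _, _, rfl⟩; exact dist_nonneg⟩ ⟨s, s', h, rfl⟩

theorem kmeansObj_ballMixDensity_eq [NeZero k] (βstar β : Fin k → E) (r : ℝ) :
    kmeansObj d k (ballMixDensity d k βstar r) β =
      (k * volume.real (closedBall (0 : E) r))⁻¹ *
        ∑ s, ∫ x in closedBall (βstar s) r, ⨅ j, ‖x - β j‖ ^ 2 := by
  set g : E → ℝ := fun x => ⨅ j, ‖x - β j‖ ^ 2
  have hg : Continuous g := continuous_ciInf_of_finite fun j => by fun_prop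
  have hint : ∀ s, Integrable ((closedBall (βstar s) r).indicator g) := fun s =>
    (integrable_indicator_iff measurableSet_closedBall).2
      (hg.continuousOn.integrableOn_compact (isCompact_closedBall _ _))
  have hpoint : ∀ x, g x * ballMixDensity d k βstar r x =
      (k * volume.real (closedBall (0 : E) r))⁻¹ * ∑ s, (closedBall (βstar s) r).indicator g x := by
    intro x
    simp only [ballMixDensity, unifBallDensity, ← measureReal_def,
      Measure.addHaar_real_closedBall_center, Finset.mul_sum]
    refine Finset.sum_congr rfl fun s _ => ?_
    by_cases hx : x ∈ closedBall (βstar s) r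
    · simp only [indicator_of_mem hx]; ring
    · simp only [indicator_of_notMem hx]; ring
  change ∫ x, g x * ballMixDensity d k βstar r x = _
  simp_rw [hpoint]
  rw [integral_const_mul, integral_finsetSum _ fun s _ => hint s]
  simp_rw [integral_indicator measurableSet_closedBall]

theorem kmeansObj_ballMixDensity_eq_of_nearest [NeZero k] {βstar β : Fin k → E} {r : ℝ}
    (hr : 0 < r) (φ : Fin k → Fin k)
    (hφ : ∀ s, ∀ x ∈ closedBall (βstar s) r, ∀ j, dist x (β (φ s)) ≤ dist x (β j)) :
    kmeansObj d k (ballMixDensity d k βstar r) β =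
      (∫ x in closedBall (0 : E) r, ‖x‖ ^ 2) / volume.real (closedBall (0 : E) r) +
        (k : ℝ)⁻¹ * ∑ s, dist (β (φ s)) (βstar s) ^ 2 := by
  have hV : volume.real (closedBall (0 : E) r) ≠ 0 :=
    (measureReal_closedBall_pos volume (0 : E) hr).ne'
  have hk : (k : ℝ) ≠ 0 := NeZero.ne _
  have hball : ∀ s, ∫ x in closedBall (βstar s) r, ⨅ j, ‖x - β j‖ ^ 2 =
      (∫ x in closedBall (0 : E) r, ‖x‖ ^ 2) +
        volume.real (closedBall (0 : E) r) * dist (β (φ s)) (βstar s) ^ 2 := by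
    intro s
    have hmin : ∀ x ∈ closedBall (βstar s) r, ⨅ j, ‖x - β j‖ ^ 2 = ‖x - β (φ s)‖ ^ 2 :=
      fun x hx => le_antisymm (ciInf_le (Finite.bddBelow_range _) _) (le_ciInf fun j => by
        simpa only [dist_eq_norm] using pow_le_pow_left₀ dist_nonneg (hφ s x hx j) 2)
    rw [setIntegral_congr_fun measurableSet_closedBall hmin, setIntegral_closedBall_norm_sub_sq,
      dist_eq_norm]
  rw [kmeansObj_ballMixDensity_eq, Finset.sum_congr rfl fun s _ => hball s,
    Finset.sum_add_distrib, ← Finset.mul_sum, Finset.sum_const, Finset.card_univ,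
    Fintype.card_fin, nsmul_eq_mul]
  field_simp

theorem kmeansObj_ballMixDensity_self [NeZero k] {βstar : Fin k → E} {r : ℝ} (hr : 0 < r)
    (hsep : Pairwise fun s s' => 4 * r ≤ dist (βstar s) (βstar s')) :
    kmeansObj d k (ballMixDensity d k βstar r) βstar =
      (∫ x in closedBall (0 : E) r, ‖x‖ ^ 2) / volume.real (closedBall (0 : E) r) := by
  have hnearest :
      ∀ s, ∀ x ∈ closedBall (βstar s) r, ∀ j, dist x (βstar s) ≤ dist x (βstar j) := by
    intro s x hx j
    rcases eq_or_ne s j with rfl | hne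
    · exact le_rfl
    · exact dist_le_dist_of_separated (b := βstar s) (b' := βstar j) (c' := βstar j) (ρ := 0) hx
        (by simpa using hr.le) (by simpa using hr.le) (by simpa using hsep hne)
  simpa using kmeansObj_ballMixDensity_eq_of_nearest hr id hnearest

theorem kmeansObj_ballMixDensity_ge_of_far {βstar β : Fin k → E} {r ρ : ℝ} (hr : 0 < r)
    (hρ : 0 ≤ ρ) {s : Fin k} (hfar : ∀ j, r + ρ ≤ dist (β j) (βstar s)) :
    ρ ^ 2 / k ≤ kmeansObj d k (ballMixDensity d k βstar r) β := by
  have : NeZero k := ⟨s.pos.ne'⟩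
  have hV : 0 < volume.real (closedBall (0 : E) r) :=
    measureReal_closedBall_pos volume (0 : E) hr
  have hnonneg : ∀ s', 0 ≤ ∫ x in closedBall (βstar s') r, ⨅ j, ‖x - β j‖ ^ 2 := fun s' =>
    setIntegral_nonneg measurableSet_closedBall fun x _ => le_ciInf fun j => by positivity
  have hball : volume.real (closedBall (0 : E) r) * ρ ^ 2 ≤
      ∫ x in closedBall (βstar s) r, ⨅ j, ‖x - β j‖ ^ 2 := by
    rw [← Measure.addHaar_real_closedBall_center volume (βstar s), ← smul_eq_mul,
      ← setIntegral_const]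
    refine setIntegral_mono_on (integrableOn_const measure_closedBall_lt_top.ne)
      ((continuous_ciInf_of_finite fun j => by fun_prop).continuousOn.integrableOn_compact
        (isCompact_closedBall _ _)) measurableSet_closedBall fun x hx => le_ciInf fun j => ?_
    have hρx : ρ ≤ ‖x - β j‖ := by
      rw [← dist_eq_norm]
      linarith [hfar j, dist_triangle (β j) x (βstar s), mem_closedBall.1 hx, dist_comm x (β j)]
    gcongr
  calc ρ ^ 2 / k
      = (k * volume.real (closedBall (0 : E) r))⁻¹ *
          (volume.real (closedBall (0 : E) r) * ρ ^ 2) := by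
        field_simp
    _ ≤ _ := by
        rw [kmeansObj_ballMixDensity_eq]
        gcongr
        exact hball.trans (Finset.single_le_sum (fun s' _ => hnonneg s') (Finset.mem_univ s))

theorem kmeansObj_ballMixDensity_eq_or_ge [NeZero k] {βstar : Fin k → E} {r : ℝ} (hr : 0 < r)
    (hsep : Pairwise fun s s' => 6 * √k * r ≤ dist (βstar s) (βstar s')) (β : Fin k → E) :
    (∃ σ : Equiv.Perm (Fin k), kmeansObj d k (ballMixDensity d k βstar r) β =
      (∫ x in closedBall (0 : E) r, ‖x‖ ^ 2) / volume.real (closedBall (0 : E) r) +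
        (k : ℝ)⁻¹ * ∑ s, dist (β (σ s)) (βstar s) ^ 2) ∨
      r ^ 2 ≤ kmeansObj d k (ballMixDensity d k βstar r) β := by
  have hk : 1 ≤ √k := Real.one_le_sqrt.2 (by exact_mod_cast NeZero.one_le)
  by_cases hnear : ∀ s, ∃ j, dist (β j) (βstar s) ≤ r + √k * r
  · have hsep' : Pairwise fun s s' => 4 * r + 2 * (√k * r) ≤ dist (βstar s) (βstar s') :=
      fun s s' h => (hsep h).trans' (by nlinarith)
    obtain ⟨σ, hσ⟩ := exists_perm_forall_dist_le_of_separated hr hsep' hnear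
    exact Or.inl ⟨σ, kmeansObj_ballMixDensity_eq_of_nearest hr σ hσ⟩
  · push Not at hnear
    obtain ⟨s, hs⟩ := hnear
    have := kmeansObj_ballMixDensity_ge_of_far hr (by positivity) fun j => (hs j).le
    rw [mul_pow, Real.sq_sqrt (Nat.cast_nonneg k), mul_div_cancel_left₀ _ (NeZero.ne _)] at this
    exact Or.inr this

end BallModel

theorem truth_is_unique_global_min_general (d k : ℕ) (hk : 2 ≤ k)
    (βstar : Fin k → EuclideanSpace ℝ (Fin d))
    (r : ℝ) (hr : 0 < r)
    (hsep : 6 * Real.sqrt k ≤ Deltamin d k βstar / r) :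
    (∀ β : Fin k → EuclideanSpace ℝ (Fin d),
        kmeansObj d k (ballMixDensity d k βstar r) βstar ≤
          kmeansObj d k (ballMixDensity d k βstar r) β) ∧
      (∀ β : Fin k → EuclideanSpace ℝ (Fin d),
        (∀ β' : Fin k → EuclideanSpace ℝ (Fin d),
            kmeansObj d k (ballMixDensity d k βstar r) β ≤
              kmeansObj d k (ballMixDensity d k βstar r) β') →
          ∃ π : Equiv.Perm (Fin k), ∀ i : Fin k, β i = βstar (π i)) := by
  have : NeZero k := ⟨by omega⟩
  have hsep' : Pairwise fun s s' => 6 * √k * r ≤ dist (βstar s) (βstar s') := fun s s' h =>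
    ((le_div_iff₀ hr).1 hsep).trans (Deltamin_le_dist βstar h)
  have hsqrt : 1 ≤ √k := Real.one_le_sqrt.2 (by exact_mod_cast NeZero.one_le)
  have hstar := kmeansObj_ballMixDensity_self hr fun s s' h => (hsep' h).trans' (by nlinarith)
  have hstar_lt : kmeansObj d k (ballMixDensity d k βstar r) βstar < r ^ 2 := by
    rw [hstar, div_lt_iff₀ (measureReal_closedBall_pos volume _ hr), mul_comm]
    exact setIntegral_closedBall_zero_norm_sq_lt volume hr
  refine ⟨fun β => ?_, fun β hmin => ?_⟩
  · rcases kmeansObj_ballMixDensity_eq_or_ge hr hsep' β with ⟨σ, hσ⟩ | hfar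
    · rw [hstar, hσ]
      exact le_add_of_nonneg_right (by positivity)
    · linarith
  · rcases kmeansObj_ballMixDensity_eq_or_ge hr hsep' β with ⟨σ, hσ⟩ | hfar
    · have hsum : ∑ s, dist (β (σ s)) (βstar s) ^ 2 = 0 := by
        have hle := hmin βstar
        rw [hσ, hstar, add_le_iff_nonpos_right] at hle
        exact le_antisymm (nonpos_of_mul_nonpos_right hle (by positivity)) (by positivity)
      have hzero := (Finset.sum_eq_zero_iff_of_nonneg fun s _ => by positivity).1 hsum
      exact ⟨σ.symm, fun i => by simpa using hzero (σ.symm i) (Finset.mem_univ _)⟩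
    · linarith [hmin βstar]

/-- Under the Stochastic Ball Model, if `η_min ≥ 6√k` then the true centers `βstar` are a
global minimum of the population k-means objective `G`, and every global minimum of `G`
is a permutation of the true centers. -/
theorem truth_is_unique_global_min (d k : ℕ) (hd : 1 ≤ d) (hk : 2 ≤ k)
    (βstar : Fin k → EuclideanSpace ℝ (Fin d)) (hinj : Function.Injective βstar)
    (r : ℝ) (hr : 0 < r)
    (hdisj : Pairwise fun s s' : Fin k =>
      Disjoint (Metric.closedBall (βstar s) r) (Metric.closedBall (βstar s') r))
    (hsep : 6 * Real.sqrt k ≤ Deltamin d k βstar / r) :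
    (∀ β : Fin k → EuclideanSpace ℝ (Fin d),
        kmeansObj d k (ballMixDensity d k βstar r) βstar ≤
          kmeansObj d k (ballMixDensity d k βstar r) β) ∧
      (∀ β : Fin k → EuclideanSpace ℝ (Fin d),
        (∀ β' : Fin k → EuclideanSpace ℝ (Fin d),
            kmeansObj d k (ballMixDensity d k βstar r) β ≤
              kmeansObj d k (ballMixDensity d k βstar r) β') →
          ∃ π : Equiv.Perm (Fin k), ∀ i : Fin k, β i = βstar (π i)) :=
  truth_is_unique_global_min_general d k hk βstar r hr hsep
end
end

section
/- Consider the Stochastic Ball Model in dimension d = 1 with k = 3, true centers β*_1 = −2, β*_2 = 0, β*_3 = 2, and radius r < 0.4 (so the three intervals [β*_s − r, β*_s + r] are disjoint and η_min > 5). Then the point β = (β_1, β_2, β_3) with β_1 = −2 − r/2, β_2 = −2 + r/2, β_3 = 1 is a local minimum of the population k-means objective G, but it is not a global minimum of G. -/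
open MeasureTheory Metric Set

noncomputable section

/-!
In dimension one, `6r · G(β)` is the sum over the intervals `[c - r, c + r]`, `c ∈ {-2, 0, 2}`,
of `∫ min_j (t - β_j)²`. Near the candidate the nearest-centre partition keeps its shape: `β₁, β₂`
split the first interval at their midpoint and `β₃` is nearest on the other two (this needs
`(β₂ + β₃)/2 ≤ -r`, i.e. `r ≤ 0.4`). A piece of length `ℓ` served by one centre costs at least
`ℓ³/12`, so the first interval costs at least `r³/6`, with equality for the symmetric split; the
other two cost `4r³/3 + 2r(β₃² + (2 - β₃)²) ≥ 4r³/3 + 4r`, with equality at `β₃ = 1`. Both bounds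
are attained at the candidate, where `G = r²/4 + 2/3`, while the true centres give `G = r²/3`.
-/

theorem continuous_iInf_of_fintype {ι X : Type*} [Fintype ι] [TopologicalSpace X]
    {f : ι → X → ℝ} (hf : ∀ i, Continuous (f i)) : Continuous fun x => ⨅ i, f i x := by
  cases isEmpty_or_nonempty ι
  · simp only [Real.iInf_of_isEmpty]; exact continuous_const
  · simp_rw [← Finset.inf'_univ_eq_ciInf]
    exact Continuous.finset_inf'_apply _ fun i _ => hf i

theorem kmeansObj_ballMixDensity (d k : ℕ) (βstar β : Fin k → EuclideanSpace ℝ (Fin d))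
    (r : ℝ) :
    kmeansObj d k (ballMixDensity d k βstar r) β =
      (k : ℝ)⁻¹ * ∑ s, (volume (closedBall (βstar s) r)).toReal⁻¹ *
        ∫ x in closedBall (βstar s) r, ⨅ j, ‖x - β j‖ ^ 2 := by
  have hint : ∀ s, Integrable
      ((closedBall (βstar s) r).indicator fun x => ⨅ j, ‖x - β j‖ ^ 2) := fun s =>
    (integrable_indicator_iff measurableSet_closedBall).2 <|
      (continuous_iInf_of_fintype fun j => by fun_prop).continuousOn.integrableOn_compact
        (isCompact_closedBall _ _)
  have hpt : ∀ x, (⨅ j, ‖x - β j‖ ^ 2) * ballMixDensity d k βstar r x =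
      (k : ℝ)⁻¹ * ∑ s, (volume (closedBall (βstar s) r)).toReal⁻¹ *
        (closedBall (βstar s) r).indicator (fun x => ⨅ j, ‖x - β j‖ ^ 2) x := by
    intro x
    simp only [ballMixDensity, unifBallDensity, Finset.mul_sum, one_div]
    refine Finset.sum_congr rfl fun s _ => ?_
    by_cases hx : x ∈ closedBall (βstar s) r
    · simp only [indicator_of_mem hx]; ring
    · simp only [indicator_of_notMem hx]; ring
  rw [kmeansObj, integral_congr_ae (ae_of_all _ hpt), integral_const_mul,
    integral_finsetSum _ fun s _ => (hint s).const_mul _]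
  simp_rw [integral_const_mul, integral_indicator measurableSet_closedBall]

-- Reducible, so that lemmas about `euclidOne` rewrite the `WithLp.toLp` literals of the theorem.
abbrev euclidOne (t : ℝ) : EuclideanSpace ℝ (Fin 1) := WithLp.toLp 2 fun _ => t

theorem vecThree_euclidOne_apply_zero (a b c : ℝ) :
    (fun j => (![euclidOne a, euclidOne b, euclidOne c] j) 0) = ![a, b, c] := by
  funext j
  fin_cases j <;> rfl

theorem dist_euclidOne (t : ℝ) (x : EuclideanSpace ℝ (Fin 1)) :
    dist (euclidOne t) x = dist t (x 0) := by
  simp [EuclideanSpace.dist_eq, euclidOne]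

theorem norm_euclidOne_sub_sq (t : ℝ) (x : EuclideanSpace ℝ (Fin 1)) :
    ‖euclidOne t - x‖ ^ 2 = (t - x 0) ^ 2 := by
  rw [← dist_eq_norm, dist_euclidOne, Real.dist_eq, sq_abs]

theorem euclidOne_preimage_closedBall (x : EuclideanSpace ℝ (Fin 1)) (r : ℝ) :
    euclidOne ⁻¹' closedBall x r = Icc (x 0 - r) (x 0 + r) := by
  ext t
  simp only [mem_preimage, mem_closedBall, dist_euclidOne, Real.dist_eq, abs_le, mem_Icc]
  constructor <;> rintro ⟨h₁, h₂⟩ <;> constructor <;> linarith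

def euclidOneEquiv : ℝ ≃ᵐ EuclideanSpace ℝ (Fin 1) :=
  (MeasurableEquiv.funUnique (Fin 1) ℝ).symm.trans (MeasurableEquiv.toLp 2 (Fin 1 → ℝ))

theorem coe_euclidOneEquiv : ⇑euclidOneEquiv = euclidOne := rfl

theorem measurePreserving_euclidOneEquiv : MeasurePreserving euclidOneEquiv :=
  (volume_preserving_funUnique (Fin 1) ℝ).symm.trans
    (EuclideanSpace.volume_preserving_symm_measurableEquiv_toLp (Fin 1)).symm

theorem volume_closedBall_euclideanSpace_fin_one (x : EuclideanSpace ℝ (Fin 1)) (r : ℝ) :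
    volume (closedBall x r) = ENNReal.ofReal (2 * r) := by
  rw [← measurePreserving_euclidOneEquiv.measure_preimage
      measurableSet_closedBall.nullMeasurableSet, coe_euclidOneEquiv,
    euclidOne_preimage_closedBall, Real.volume_Icc]
  ring_nf

theorem setIntegral_closedBall_euclideanSpace_fin_one (f : EuclideanSpace ℝ (Fin 1) → ℝ)
    (x : EuclideanSpace ℝ (Fin 1)) (r : ℝ) :
    ∫ y in closedBall x r, f y = ∫ t in Icc (x 0 - r) (x 0 + r), f (euclidOne t) := by
  rw [← euclidOne_preimage_closedBall, ← coe_euclidOneEquiv]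
  exact (measurePreserving_euclidOneEquiv.setIntegral_preimage_emb
    euclidOneEquiv.measurableEmbedding _ _).symm

def minSqDist {ι : Type*} [Fintype ι] (b : ι → ℝ) (t : ℝ) : ℝ := ⨅ j, (t - b j) ^ 2

theorem continuous_minSqDist {ι : Type*} [Fintype ι] (b : ι → ℝ) :
    Continuous (minSqDist b) :=
  continuous_iInf_of_fintype fun j => by fun_prop

theorem kmeansObj_one_ballMixDensity (k : ℕ) (βstar β : Fin k → EuclideanSpace ℝ (Fin 1))
    {r : ℝ} (hr : 0 ≤ r) :
    kmeansObj 1 k (ballMixDensity 1 k βstar r) β = (2 * k * r)⁻¹ *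
      ∑ s, ∫ t in (βstar s 0 - r)..(βstar s 0 + r), minSqDist (fun j => β j 0) t := by
  have hle : ∀ c : ℝ, c - r ≤ c + r := fun c => by linarith
  simp only [kmeansObj_ballMixDensity, volume_closedBall_euclideanSpace_fin_one,
    ENNReal.toReal_ofReal (by positivity : (0 : ℝ) ≤ 2 * r),
    setIntegral_closedBall_euclideanSpace_fin_one, norm_euclidOne_sub_sq,
    intervalIntegral.integral_of_le, hle, integral_Icc_eq_integral_Ioc,
    minSqDist, Finset.mul_sum]
  refine Finset.sum_congr rfl fun s _ => ?_
  ring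

theorem integral_sq_sub (p q c : ℝ) :
    ∫ t in p..q, (t - c) ^ 2 = ((q - c) ^ 3 - (p - c) ^ 3) / 3 := by
  rw [intervalIntegral.integral_comp_sub_right (fun t => t ^ 2), integral_pow]
  ring

theorem le_integral_sq_sub {p q : ℝ} (hpq : p ≤ q) (c : ℝ) :
    (q - p) ^ 3 / 12 ≤ ∫ t in p..q, (t - c) ^ 2 := by
  rw [integral_sq_sub]
  nlinarith [mul_nonneg (sub_nonneg.2 hpq) (sq_nonneg (p + q - 2 * c))]

theorem minSqDist_eq_of_forall_le {ι : Type*} [Fintype ι] {b : ι → ℝ} {t : ℝ} (i : ι)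
    (h : ∀ j, (t - b i) ^ 2 ≤ (t - b j) ^ 2) : minSqDist b t = (t - b i) ^ 2 :=
  have : Nonempty ι := ⟨i⟩
  le_antisymm (ciInf_le (Finite.bddBelow_range _) i) (le_ciInf h)

theorem sq_sub_le_sq_sub_of_two_mul_le {t u v : ℝ} (huv : u ≤ v) (h : 2 * t ≤ u + v) :
    (t - u) ^ 2 ≤ (t - v) ^ 2 := by
  nlinarith [mul_nonneg (sub_nonneg.2 huv) (sub_nonneg.2 h)]

theorem sq_sub_le_sq_sub_of_le_two_mul {t u v : ℝ} (huv : u ≤ v) (h : u + v ≤ 2 * t) :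
    (t - v) ^ 2 ≤ (t - u) ^ 2 := by
  nlinarith [mul_nonneg (sub_nonneg.2 huv) (sub_nonneg.2 h)]

section FinThree

variable {b : Fin 3 → ℝ} {t : ℝ}

theorem minSqDist_fin_three_of_le_left (h₀₁ : b 0 ≤ b 1) (h₁₂ : b 1 ≤ b 2)
    (ht : 2 * t ≤ b 0 + b 1) : minSqDist b t = (t - b 0) ^ 2 := by
  refine minSqDist_eq_of_forall_le 0 fun j => ?_
  fin_cases j <;> simp only [Fin.zero_eta, Fin.mk_one, Fin.reduceFinMk]
  · exact le_rfl
  · exact sq_sub_le_sq_sub_of_two_mul_le h₀₁ ht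
  · exact sq_sub_le_sq_sub_of_two_mul_le (h₀₁.trans h₁₂) (by linarith)

theorem minSqDist_fin_three_of_mem_middle (h₀₁ : b 0 ≤ b 1) (h₁₂ : b 1 ≤ b 2)
    (ht₀ : b 0 + b 1 ≤ 2 * t) (ht₁ : 2 * t ≤ b 1 + b 2) : minSqDist b t = (t - b 1) ^ 2 := by
  refine minSqDist_eq_of_forall_le 1 fun j => ?_
  fin_cases j <;> simp only [Fin.zero_eta, Fin.mk_one, Fin.reduceFinMk]
  · exact sq_sub_le_sq_sub_of_le_two_mul h₀₁ ht₀
  · exact le_rfl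
  · exact sq_sub_le_sq_sub_of_two_mul_le h₁₂ ht₁

theorem minSqDist_fin_three_of_le_right (h₀₁ : b 0 ≤ b 1) (h₁₂ : b 1 ≤ b 2)
    (ht : b 1 + b 2 ≤ 2 * t) : minSqDist b t = (t - b 2) ^ 2 := by
  refine minSqDist_eq_of_forall_le 2 fun j => ?_
  fin_cases j <;> simp only [Fin.zero_eta, Fin.mk_one, Fin.reduceFinMk]
  · exact sq_sub_le_sq_sub_of_le_two_mul (h₀₁.trans h₁₂) (by linarith)
  · exact sq_sub_le_sq_sub_of_le_two_mul h₁₂ ht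
  · exact le_rfl

end FinThree

theorem integral_minSqDist_eq_of_eqOn {ι : Type*} [Fintype ι] {b : ι → ℝ} {p q c : ℝ}
    (hpq : p ≤ q) (h : ∀ t ∈ Icc p q, minSqDist b t = (t - c) ^ 2) :
    ∫ t in p..q, minSqDist b t = ∫ t in p..q, (t - c) ^ 2 :=
  intervalIntegral.integral_congr fun t ht => h t (uIcc_of_le hpq ▸ ht)

def threeBallLoss (r : ℝ) (b : Fin 3 → ℝ) : ℝ :=
  (∫ t in (-2 - r)..(-2 + r), minSqDist b t) + (∫ t in (-r)..r, minSqDist b t) +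
    ∫ t in (2 - r)..(2 + r), minSqDist b t

theorem kmeansObj_threeBalls {r : ℝ} (hr : 0 ≤ r) (β : Fin 3 → EuclideanSpace ℝ (Fin 1)) :
    kmeansObj 1 3 (ballMixDensity 1 3 ![euclidOne (-2), euclidOne 0, euclidOne 2] r) β =
      (6 * r)⁻¹ * threeBallLoss r (fun j => β j 0) := by
  rw [kmeansObj_one_ballMixDensity _ _ _ hr, Fin.sum_univ_three, threeBallLoss]
  simp only [Matrix.cons_val_zero, Matrix.cons_val_one, Matrix.cons_val_two, Matrix.head_cons,
    Matrix.tail_cons, euclidOne, WithLp.ofLp_toLp, zero_sub, zero_add]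
  ring

theorem threeBallLoss_spurious {r : ℝ} (hr₀ : 0 ≤ r) (hr : r ≤ 2 / 5) :
    threeBallLoss r ![-2 - r / 2, -2 + r / 2, 1] = 3 * r ^ 3 / 2 + 4 * r := by
  set b : Fin 3 → ℝ := ![-2 - r / 2, -2 + r / 2, 1] with hb
  have h₀₁ : b 0 ≤ b 1 := by simp [hb]; linarith
  have h₁₂ : b 1 ≤ b 2 := by simp [hb]; linarith
  have hsplit := intervalIntegral.integral_add_adjacent_intervals
    ((continuous_minSqDist b).intervalIntegrable (μ := volume) (-2 - r) (-2))
    ((continuous_minSqDist b).intervalIntegrable (μ := volume) (-2) (-2 + r))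
  rw [threeBallLoss, ← hsplit,
    integral_minSqDist_eq_of_eqOn (c := b 0) (by linarith) fun t ht =>
      minSqDist_fin_three_of_le_left h₀₁ h₁₂ (by simp [hb]; linarith [ht.2]),
    integral_minSqDist_eq_of_eqOn (c := b 1) (by linarith) fun t ht =>
      minSqDist_fin_three_of_mem_middle h₀₁ h₁₂ (by simp [hb]; linarith [ht.1])
        (by simp [hb]; linarith [ht.2]),
    integral_minSqDist_eq_of_eqOn (c := b 2) (by linarith) fun t ht =>
      minSqDist_fin_three_of_le_right h₀₁ h₁₂ (by simp [hb]; linarith [ht.1]),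
    integral_minSqDist_eq_of_eqOn (c := b 2) (by linarith) fun t ht =>
      minSqDist_fin_three_of_le_right h₀₁ h₁₂ (by simp [hb]; linarith [ht.1])]
  simp only [integral_sq_sub, hb, Matrix.cons_val_zero, Matrix.cons_val_one, Matrix.cons_val_two,
    Matrix.head_cons, Matrix.tail_cons]
  ring

theorem threeBallLoss_true {r : ℝ} (hr₀ : 0 ≤ r) (hr : r ≤ 1) :
    threeBallLoss r ![-2, 0, 2] = 2 * r ^ 3 := by
  set b : Fin 3 → ℝ := ![-2, 0, 2] with hb
  have h₀₁ : b 0 ≤ b 1 := by simp [hb]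
  have h₁₂ : b 1 ≤ b 2 := by simp [hb]
  rw [threeBallLoss,
    integral_minSqDist_eq_of_eqOn (c := b 0) (by linarith) fun t ht =>
      minSqDist_fin_three_of_le_left h₀₁ h₁₂ (by simp [hb]; linarith [ht.2]),
    integral_minSqDist_eq_of_eqOn (c := b 1) (by linarith) fun t ht =>
      minSqDist_fin_three_of_mem_middle h₀₁ h₁₂ (by simp [hb]; linarith [ht.1])
        (by simp [hb]; linarith [ht.2]),
    integral_minSqDist_eq_of_eqOn (c := b 2) (by linarith) fun t ht =>
      minSqDist_fin_three_of_le_right h₀₁ h₁₂ (by simp [hb]; linarith [ht.1])]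
  simp only [integral_sq_sub, hb, Matrix.cons_val_zero, Matrix.cons_val_one, Matrix.cons_val_two,
    Matrix.head_cons, Matrix.tail_cons]
  ring

theorem le_threeBallLoss {r : ℝ} (hr : 0 ≤ r) {b : Fin 3 → ℝ} (h₀₁ : b 0 ≤ b 1)
    (h₁₂ : b 1 ≤ b 2) (hm₀₁ : b 0 + b 1 ∈ Icc (-4 - 2 * r) (-4 + 2 * r))
    (hm₁₂ : b 1 + b 2 ∈ Icc (-4 + 2 * r) (-2 * r)) :
    3 * r ^ 3 / 2 + 4 * r ≤ threeBallLoss r b := by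
  set m := (b 0 + b 1) / 2 with hm
  have hsplit := intervalIntegral.integral_add_adjacent_intervals
    ((continuous_minSqDist b).intervalIntegrable (μ := volume) (-2 - r) m)
    ((continuous_minSqDist b).intervalIntegrable (μ := volume) m (-2 + r))
  have hleft : (m - (-2 - r)) ^ 3 / 12 ≤ ∫ t in (-2 - r)..m, minSqDist b t := by
    have hpm : -2 - r ≤ m := by linarith [hm₀₁.1, hm]
    rw [integral_minSqDist_eq_of_eqOn (c := b 0) hpm fun t ht =>
      minSqDist_fin_three_of_le_left h₀₁ h₁₂ (by linarith [ht.2, hm])]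
    exact le_integral_sq_sub hpm _
  have hright : (-2 + r - m) ^ 3 / 12 ≤ ∫ t in m..(-2 + r), minSqDist b t := by
    have hmq : m ≤ -2 + r := by linarith [hm₀₁.2, hm]
    rw [integral_minSqDist_eq_of_eqOn (c := b 1) hmq fun t ht =>
      minSqDist_fin_three_of_mem_middle h₀₁ h₁₂ (by linarith [ht.1, hm])
        (by linarith [ht.2, hm₁₂.1])]
    exact le_integral_sq_sub hmq _
  have hmiddle : ∫ t in (-r)..r, minSqDist b t = ((r - b 2) ^ 3 - (-r - b 2) ^ 3) / 3 := by
    rw [integral_minSqDist_eq_of_eqOn (c := b 2) (by linarith) fun t ht =>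
      minSqDist_fin_three_of_le_right h₀₁ h₁₂ (by linarith [ht.1, hm₁₂.2]), integral_sq_sub]
  have hlast : ∫ t in (2 - r)..(2 + r), minSqDist b t =
      ((2 + r - b 2) ^ 3 - (2 - r - b 2) ^ 3) / 3 := by
    rw [integral_minSqDist_eq_of_eqOn (c := b 2) (by linarith) fun t ht =>
      minSqDist_fin_three_of_le_right h₀₁ h₁₂ (by linarith [ht.1, hm₁₂.2]), integral_sq_sub]
  rw [threeBallLoss, ← hsplit, hmiddle, hlast]
  nlinarith [mul_nonneg hr (sq_nonneg (m + 2)), mul_nonneg hr (sq_nonneg (b 2 - 1))]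

theorem isLocalMin_threeBallLoss_spurious {r : ℝ} (hr₀ : 0 < r) (hr : r < 2 / 5) :
    IsLocalMin (threeBallLoss r) ![-2 - r / 2, -2 + r / 2, 1] := by
  set b₀ : Fin 3 → ℝ := ![-2 - r / 2, -2 + r / 2, 1] with hb₀
  have eventually_lt {f g : (Fin 3 → ℝ) → ℝ} (hf : Continuous f) (hg : Continuous g)
      (h : f b₀ < g b₀) : ∀ᶠ b in nhds b₀, f b < g b :=
    hf.continuousAt.eventually_lt hg.continuousAt h
  filter_upwards [eventually_lt (f := (· 0)) (g := (· 1)) (by fun_prop) (by fun_prop)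
      (by simp [hb₀]; linarith),
    eventually_lt (f := (· 1)) (g := (· 2)) (by fun_prop) (by fun_prop)
      (by simp [hb₀]; linarith),
    eventually_lt (f := fun _ => -4 - 2 * r) (g := fun b => b 0 + b 1) (by fun_prop) (by fun_prop)
      (by simp [hb₀]; linarith),
    eventually_lt (f := fun b => b 0 + b 1) (g := fun _ => -4 + 2 * r) (by fun_prop) (by fun_prop)
      (by simp [hb₀]; linarith),
    eventually_lt (f := fun _ => -4 + 2 * r) (g := fun b => b 1 + b 2) (by fun_prop) (by fun_prop)
      (by simp [hb₀]; linarith),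
    eventually_lt (f := fun b => b 1 + b 2) (g := fun _ => -2 * r) (by fun_prop) (by fun_prop)
      (by simp [hb₀]; linarith)] with b h₀₁ h₁₂ hm₀₁ hm₀₁' hm₁₂ hm₁₂'
  rw [threeBallLoss_spurious hr₀.le hr.le]
  exact le_threeBallLoss hr₀.le h₀₁.le h₁₂.le ⟨hm₀₁.le, hm₀₁'.le⟩ ⟨hm₁₂.le, hm₁₂'.le⟩

/-- One-dimensional Stochastic Ball Model with `k = 3`, true centers `-2, 0, 2` and radius
`r < 0.4`: the configuration `(-2 - r/2, -2 + r/2, 1)` is a local minimum of the population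
k-means objective `G`, but not a global minimum. -/
theorem spurious_local_min_exists (r : ℝ) (hr0 : 0 < r) (hr : r < 0.4) :
    IsLocalMin
        (kmeansObj 1 3
          (ballMixDensity 1 3
            ![(WithLp.toLp 2 (fun _ => (-2 : ℝ)) : EuclideanSpace ℝ (Fin 1)),
              (WithLp.toLp 2 (fun _ => (0 : ℝ)) : EuclideanSpace ℝ (Fin 1)),
              (WithLp.toLp 2 (fun _ => (2 : ℝ)) : EuclideanSpace ℝ (Fin 1))] r))
        ![(WithLp.toLp 2 (fun _ => -2 - r / 2) : EuclideanSpace ℝ (Fin 1)),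
          (WithLp.toLp 2 (fun _ => -2 + r / 2) : EuclideanSpace ℝ (Fin 1)),
          (WithLp.toLp 2 (fun _ => (1 : ℝ)) : EuclideanSpace ℝ (Fin 1))] ∧
      ¬ (∀ β' : Fin 3 → EuclideanSpace ℝ (Fin 1),
          kmeansObj 1 3
              (ballMixDensity 1 3
                ![(WithLp.toLp 2 (fun _ => (-2 : ℝ)) : EuclideanSpace ℝ (Fin 1)),
                  (WithLp.toLp 2 (fun _ => (0 : ℝ)) : EuclideanSpace ℝ (Fin 1)),
                  (WithLp.toLp 2 (fun _ => (2 : ℝ)) : EuclideanSpace ℝ (Fin 1))] r)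
              ![(WithLp.toLp 2 (fun _ => -2 - r / 2) : EuclideanSpace ℝ (Fin 1)),
                (WithLp.toLp 2 (fun _ => -2 + r / 2) : EuclideanSpace ℝ (Fin 1)),
                (WithLp.toLp 2 (fun _ => (1 : ℝ)) : EuclideanSpace ℝ (Fin 1))] ≤
            kmeansObj 1 3
              (ballMixDensity 1 3
                ![(WithLp.toLp 2 (fun _ => (-2 : ℝ)) : EuclideanSpace ℝ (Fin 1)),
                  (WithLp.toLp 2 (fun _ => (0 : ℝ)) : EuclideanSpace ℝ (Fin 1)),
                  (WithLp.toLp 2 (fun _ => (2 : ℝ)) : EuclideanSpace ℝ (Fin 1))] r) β') := by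
  have hr' : r < 2 / 5 := by norm_num at hr; exact hr
  have hG := kmeansObj_threeBalls hr0.le
  refine ⟨?_, fun hglobal => ?_⟩
  · have hloss : IsLocalMin
        (threeBallLoss r ∘ fun (β : Fin 3 → EuclideanSpace ℝ (Fin 1)) j => β j 0)
        ![euclidOne (-2 - r / 2), euclidOne (-2 + r / 2), euclidOne 1] := by
      refine IsLocalMin.comp_continuous ?_ <| Continuous.continuousAt <|
        continuous_pi fun j => (PiLp.continuous_apply 2 _ 0).comp (continuous_apply j)
      rw [vecThree_euclidOne_apply_zero]
      exact isLocalMin_threeBallLoss_spurious hr0 hr'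
    filter_upwards [hloss] with β hβ
    rw [hG, hG]
    exact mul_le_mul_of_nonneg_left hβ (by positivity)
  · have h := hglobal ![euclidOne (-2), euclidOne 0, euclidOne 2]
    rw [hG, hG, vecThree_euclidOne_apply_zero, vecThree_euclidOne_apply_zero,
      threeBallLoss_spurious hr0.le hr'.le, threeBallLoss_true hr0.le (by linarith)] at h
    have := le_of_mul_le_mul_left h (by positivity)
    nlinarith [mul_lt_mul_of_pos_left hr' (mul_pos hr0 hr0)]
end
end

section
/- (Family of bounds for the ball model, Part 2: mass bounds.) Let β = (β_1, …, β_k) ∈ (ℝ^d)^k be a local minimum of G and let λ > 0. Fix i ∈ [k] and s ∈ T_i, and suppose ρ_s(∂_{j,ℓ}) ≤ λ for every pair (j, ℓ) with j ≠ ℓ. Then: if s ∈ A_i, P_s(V_i(β)) ≥ 1 − k²λr; and if s ∈ T_i \ A_i, P_s(V_i(β)) ≤ kλr. -/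
open MeasureTheory Metric Set

noncomputable section

/-- Voronoi set of the fitted center `β i`. -/
def voronoi (d k : ℕ) (β : Fin k → EuclideanSpace ℝ (Fin d)) (i : Fin k) :
    Set (EuclideanSpace ℝ (Fin d)) :=
  {x | ∀ j : Fin k, ‖x - β i‖ ≤ ‖x - β j‖}

/-- Voronoi boundary between the fitted centers `β i` and `β j`. -/
def vorBoundary (d k : ℕ) (β : Fin k → EuclideanSpace ℝ (Fin d)) (i j : Fin k) :
    Set (EuclideanSpace ℝ (Fin d)) :=
  {x ∈ voronoi d k β i ∪ voronoi d k β j | ‖x - β i‖ = ‖x - β j‖}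

/-- `ρ_s(∂_{i,j})`: relative volume ((d−1)-dimensional Hausdorff measure, normalized by the
volume of a radius-`r` ball) of the part of the Voronoi boundary `∂_{i,j}(β)` inside the
true cluster `B_s`. -/
def rhoBoundary (d k : ℕ) (βstar : Fin k → EuclideanSpace ℝ (Fin d)) (r : ℝ)
    (β : Fin k → EuclideanSpace ℝ (Fin d)) (s i j : Fin k) : ℝ :=
  (MeasureTheory.Measure.hausdorffMeasure ((d : ℝ) - 1)
      (vorBoundary d k β i j ∩ Metric.closedBall (βstar s) r)).toReal /
    ((volume (Metric.ball (0 : EuclideanSpace ℝ (Fin d)) 1)).toReal * r ^ d)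

/-- `T_i`: the indices of true clusters meeting the Voronoi set `V_i(β)`. -/
def Tset (d k : ℕ) (βstar : Fin k → EuclideanSpace ℝ (Fin d)) (r : ℝ)
    (β : Fin k → EuclideanSpace ℝ (Fin d)) (i : Fin k) : Set (Fin k) :=
  {s | (voronoi d k β i ∩ Metric.closedBall (βstar s) r).Nonempty}

/-- `A_i`: the indices of true centers lying in the interior of the Voronoi set `V_i(β)`. -/
def Aset (d k : ℕ) (βstar : Fin k → EuclideanSpace ℝ (Fin d)) (r : ℝ)
    (β : Fin k → EuclideanSpace ℝ (Fin d)) (i : Fin k) : Set (Fin k) :=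
  {s | βstar s ∈ interior (voronoi d k β i)}

/-- Maximum pairwise distance among the true centers. -/
def Deltamax (d k : ℕ) (βstar : Fin k → EuclideanSpace ℝ (Fin d)) : ℝ :=
  sSup {y : ℝ | ∃ s s' : Fin k, s ≠ s' ∧ y = dist (βstar s) (βstar s')}

/-!
A Voronoi cell `V_j` lies in the half-space of points at least as close to `β j` as to `β l`.
If the center `p` of the ball `B` lies on the other side, slide each point of `V_j ∩ B` along
the normal towards the hyperplane through `p`: the foot of the slide is not interior to `V_j`,
so the slide crosses `∂V_j` inside `B`. Thus `V_j ∩ B` lies in a cylinder of height `r` over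
the orthogonal projection of `∂V_j ∩ B`, and
`vol (V_j ∩ B) ≤ r · H^{d-1} (∂V_j ∩ B) ≤ r · k λ vol B`, as `∂V_j` is covered by the boundaries
`∂_{j,l}`. If `β*_s ∉ int V_i` this applies to `V_i`; if `β*_s ∈ int V_i`, it applies to each of
the other cells, which cover `B \ V_i`.
-/

open RealInnerProductSpace Module Filter Topology
open scoped ENNReal

theorem IsPreconnected.inter_frontier_nonempty {X : Type*} [TopologicalSpace X] {s K : Set X}
    (hs : IsPreconnected s) (hsK : (s ∩ K).Nonempty) (hsK' : ¬s ⊆ interior K) :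
    (s ∩ frontier K).Nonempty := by
  by_contra hempty
  have hcover : s ⊆ interior K ∪ (closure K)ᶜ := fun y hy => by
    by_cases hyK : y ∈ closure K
    · exact Or.inl (by_contra fun h => hempty ⟨y, hy, hyK, h⟩)
    · exact Or.inr hyK
  obtain ⟨x, hxs, hxK⟩ := hsK
  have hxK' : x ∈ interior K := (hcover hxs).resolve_right (not_not.2 (subset_closure hxK))
  exact hsK' (hs.subset_left_of_subset_union isOpen_interior isClosed_closure.isOpen_compl
    (disjoint_compl_right_iff_subset.2 interior_subset_closure) hcover ⟨x, hxs, hxK'⟩)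

section HyperplaneProjection

variable {E : Type*} [NormedAddCommGroup E] [InnerProductSpace ℝ E]

theorem inner_sub_sub_nonneg_of_norm_sub_le {a b p x : E} (hx : ‖x - a‖ ≤ ‖x - b‖)
    (hp : ‖p - b‖ ≤ ‖p - a‖) : 0 ≤ ⟪x - p, a - b⟫ := by
  have hx2 := pow_le_pow_left₀ (norm_nonneg _) hx 2
  have hp2 := pow_le_pow_left₀ (norm_nonneg _) hp 2
  rw [norm_sub_sq_real, norm_sub_sq_real] at hx2 hp2
  rw [inner_sub_left, inner_sub_right, inner_sub_right]
  linarith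

theorem inner_sub_eq_of_norm_sub_eq {a b x : E} (h : ‖x - a‖ = ‖x - b‖) :
    ⟪x, b - a⟫ = (‖b‖ ^ 2 - ‖a‖ ^ 2) / 2 := by
  have h2 := congrArg (· ^ 2) h
  simp only [norm_sub_sq_real] at h2
  rw [inner_sub_right]
  linarith

/-- The orthogonal projection onto the hyperplane through `p` normal to `u`, provided `‖u‖ = 1`. -/
def hyperplaneProj (p u x : E) : E :=
  x - ⟪x - p, u⟫ • u

variable {p u : E}

theorem hyperplaneProj_add_inner_smul (x : E) : hyperplaneProj p u x + ⟪x - p, u⟫ • u = x :=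
  sub_add_cancel _ _

theorem inner_hyperplaneProj_sub (hu : ‖u‖ = 1) (x : E) : ⟪hyperplaneProj p u x - p, u⟫ = 0 := by
  rw [hyperplaneProj, sub_right_comm, inner_sub_left, real_inner_smul_left,
    real_inner_self_eq_norm_sq, hu]
  ring

theorem hyperplaneProj_add_smul (hu : ‖u‖ = 1) (x : E) (t : ℝ) :
    hyperplaneProj p u (x + t • u) = hyperplaneProj p u x := by
  simp only [hyperplaneProj, add_sub_right_comm x, inner_add_left, real_inner_smul_left,
    real_inner_self_eq_norm_sq, hu]
  module

theorem hyperplaneProj_self : hyperplaneProj p u p = p := by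
  simp [hyperplaneProj]

theorem lipschitzWith_hyperplaneProj (hu : ‖u‖ = 1) : LipschitzWith 1 (hyperplaneProj p u) := by
  refine LipschitzWith.of_dist_le_mul fun x y => ?_
  set w := x - y
  have hxy : hyperplaneProj p u x - hyperplaneProj p u y = w - ⟪w, u⟫ • u := by
    simp only [hyperplaneProj, w, inner_sub_left, sub_smul]
    abel
  have hw : ‖w - ⟪w, u⟫ • u‖ ^ 2 ≤ ‖w‖ ^ 2 := by
    rw [norm_sub_sq_real, real_inner_smul_right, norm_smul, Real.norm_eq_abs, hu, mul_one, sq_abs]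
    nlinarith [sq_nonneg ⟪w, u⟫]
  rw [NNReal.coe_one, one_mul, dist_eq_norm, dist_eq_norm, hxy]
  exact (pow_le_pow_iff_left₀ (norm_nonneg _) (norm_nonneg _) two_ne_zero).1 hw

theorem hyperplaneProj_notMem_interior (hu : ‖u‖ = 1) {K : Set E}
    (hKu : ∀ x ∈ K, 0 ≤ ⟪x - p, u⟫) (x : E) : hyperplaneProj p u x ∉ interior K := by
  set z := hyperplaneProj p u x
  intro hzK
  have hline : Tendsto (fun t : ℝ => z + t • u) (𝓝 0) (𝓝 z) := by
    have hc : Continuous fun t : ℝ => z + t • u := by fun_prop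
    simpa using hc.tendsto 0
  have hnhds : ∀ᶠ t : ℝ in 𝓝[<] 0, z + t • u ∈ K :=
    nhdsWithin_le_nhds (hline.eventually (mem_interior_iff_mem_nhds.1 hzK))
  obtain ⟨t, htK, ht⟩ := (hnhds.and self_mem_nhdsWithin).exists
  have h := hKu _ htK
  rw [add_sub_right_comm, inner_add_left, inner_hyperplaneProj_sub hu, real_inner_smul_left,
    real_inner_self_eq_norm_sq, hu, one_pow, mul_one, zero_add] at h
  exact (not_le.2 ht) h

theorem inter_closedBall_subset_image2_hyperplaneProj_frontier (hu : ‖u‖ = 1) {K : Set E}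
    (hKu : ∀ x ∈ K, 0 ≤ ⟪x - p, u⟫) (r : ℝ) :
    K ∩ closedBall p r ⊆
      image2 (fun z t => z + t • u) (hyperplaneProj p u '' (frontier K ∩ closedBall p r))
        (Icc 0 r) := by
  rintro x ⟨hxK, hxB⟩
  set z := hyperplaneProj p u x
  have hzx : z + ⟪x - p, u⟫ • u = x := hyperplaneProj_add_inner_smul x
  have hzB : z ∈ closedBall p r := by
    have := (lipschitzWith_hyperplaneProj (p := p) hu).dist_le_mul x p
    rw [hyperplaneProj_self, NNReal.coe_one, one_mul] at this
    exact mem_closedBall.2 (this.trans hxB)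
  obtain ⟨y, hyz, hyK⟩ := (convex_segment z x).isPreconnected.inter_frontier_nonempty
    ⟨x, right_mem_segment ℝ z x, hxK⟩
    fun h => hyperplaneProj_notMem_interior hu hKu x (h (left_mem_segment ℝ z x))
  have hslide : ∀ t : ℝ, hyperplaneProj p u (z + t • u) = z := fun t => by
    calc hyperplaneProj p u (z + t • u)
        = hyperplaneProj p u ((z + ⟪x - p, u⟫ • u) + (t - ⟪x - p, u⟫) • u) := by
          congr 1; module
      _ = hyperplaneProj p u (x + (t - ⟪x - p, u⟫) • u) := by rw [hzx]
      _ = z := hyperplaneProj_add_smul hu x _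
  refine ⟨z, ⟨y, ⟨hyK, (convex_closedBall p r).segment_subset hzB hxB hyz⟩, ?_⟩,
    ⟪x - p, u⟫, ⟨hKu x hxK, ?_⟩, hzx⟩
  · obtain ⟨θ, -, rfl⟩ := (segment_eq_image' ℝ z x) ▸ hyz
    dsimp only
    rw [← hzx, add_sub_cancel_left, smul_smul]
    exact hslide _
  · exact (real_inner_le_norm _ _).trans (by rw [hu, mul_one]; exact mem_closedBall_iff_norm.1 hxB)

end HyperplaneProjection

section Coordinates

variable {n : ℕ}

theorem lipschitzWith_tail_ofLp :
    LipschitzWith 1 fun y : EuclideanSpace ℝ (Fin (n + 1)) => Fin.tail y.ofLp :=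
  LipschitzWith.of_dist_le_mul fun x y => by
    rw [NNReal.coe_one, one_mul]
    exact (dist_pi_le_iff dist_nonneg).2 fun i => PiLp.dist_apply_le x y i.succ

theorem volume_image2_add_smul_single_le {B : Set (EuclideanSpace ℝ (Fin (n + 1)))} {c : ℝ}
    (hB : ∀ y ∈ B, y 0 = c) (r : ℝ) :
    volume (image2 (fun z t => z + t • EuclideanSpace.single 0 1) B (Icc 0 r)) ≤
      ENNReal.ofReal r * μH[n] B := by
  set tail := fun y : EuclideanSpace ℝ (Fin (n + 1)) => Fin.tail y.ofLp
  set e := (MeasurableEquiv.toLp 2 (Fin (n + 1) → ℝ)).symm.trans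
    (MeasurableEquiv.piFinSuccAbove (fun _ => ℝ) 0)
  have he : MeasurePreserving e volume (volume.prod volume) :=
    (volume_preserving_piFinSuccAbove (fun _ => ℝ) 0).comp
      (EuclideanSpace.volume_preserving_symm_measurableEquiv_toLp _)
  have hsub : image2 (fun z t => z + t • EuclideanSpace.single 0 1) B (Icc 0 r) ⊆
      e ⁻¹' (Icc c (c + r) ×ˢ (tail '' B)) := by
    rintro _ ⟨z, hz, t, ht, rfl⟩
    refine ⟨?_, z, hz, ?_⟩
    · simp [e, hB z hz, ht.1, ht.2, MeasurableEquiv.piFinSuccAbove]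
    · ext i
      simp [e, tail, MeasurableEquiv.piFinSuccAbove, Fin.tail]
  calc _ ≤ volume (e ⁻¹' (Icc c (c + r) ×ˢ (tail '' B))) := measure_mono hsub
    _ = ENNReal.ofReal r * volume (tail '' B) := by
      rw [he.measure_preimage_equiv, Measure.prod_prod, Real.volume_Icc, add_sub_cancel_left]
    _ = ENNReal.ofReal r * μH[n] (tail '' B) := by
      rw [← hausdorffMeasure_pi_real, Fintype.card_fin]
    _ ≤ ENNReal.ofReal r * μH[n] B := by
      gcongr
      simpa using lipschitzWith_tail_ofLp.hausdorffMeasure_image_le (Nat.cast_nonneg n) B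

end Coordinates

section FiniteDimensional

variable {E : Type*} [NormedAddCommGroup E] [InnerProductSpace ℝ E] [FiniteDimensional ℝ E]
  {n : ℕ}

theorem exists_orthonormalBasis_apply_zero_eq (hE : finrank ℝ E = n + 1) {u : E}
    (hu : ‖u‖ = 1) : ∃ b : OrthonormalBasis (Fin (n + 1)) ℝ E, b 0 = u := by
  have horth : Orthonormal ℝ (({0} : Set (Fin (n + 1))).domRestrict fun _ => u) :=
    ⟨fun _ => hu, fun i j hij => absurd (Subsingleton.elim i j) hij⟩
  obtain ⟨b, hb⟩ := horth.exists_orthonormalBasis_extension_of_card_eq (by simpa using hE)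
  exact ⟨b, hb 0 rfl⟩

variable [MeasurableSpace E] [BorelSpace E]

theorem volume_image2_add_smul_le (hE : finrank ℝ E = n + 1) {u : E} (hu : ‖u‖ = 1)
    {A : Set E} {c : ℝ} (hA : ∀ z ∈ A, ⟪z, u⟫ = c) (r : ℝ) :
    volume (image2 (fun z t => z + t • u) A (Icc 0 r)) ≤ ENNReal.ofReal r * μH[n] A := by
  obtain ⟨b, rfl⟩ := exists_orthonormalBasis_apply_zero_eq hE hu
  have himage : b.repr '' image2 (fun z t => z + t • b 0) A (Icc 0 r) =
      image2 (fun z t => z + t • EuclideanSpace.single 0 1) (b.repr '' A) (Icc 0 r) := by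
    simp [image_image2, image2_image_left]
  have hcoord : ∀ y ∈ b.repr '' A, y 0 = c := by
    rintro _ ⟨z, hz, rfl⟩
    rw [b.repr_apply_apply, real_inner_comm, hA z hz]
  calc volume (image2 (fun z t => z + t • b 0) A (Icc 0 r))
      = volume (b.repr '' image2 (fun z t => z + t • b 0) A (Icc 0 r)) := by
        rw [← b.measurePreserving_repr.measure_preimage_emb
          b.repr.toHomeomorph.measurableEmbedding, preimage_image_eq _ b.repr.injective]
    _ ≤ ENNReal.ofReal r * μH[n] (b.repr '' A) := himage ▸ volume_image2_add_smul_single_le hcoord r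
    _ = ENNReal.ofReal r * μH[n] A := by
      rw [b.repr.isometry.hausdorffMeasure_image (Or.inl (Nat.cast_nonneg n))]

theorem volume_inter_closedBall_le_of_subset_halfspace (hE : finrank ℝ E = n + 1) {p u : E}
    (hu : ‖u‖ = 1) {K : Set E} (hKu : ∀ x ∈ K, 0 ≤ ⟪x - p, u⟫) (r : ℝ) :
    volume (K ∩ closedBall p r) ≤ ENNReal.ofReal r * μH[n] (frontier K ∩ closedBall p r) := by
  have hA : ∀ z ∈ hyperplaneProj p u '' (frontier K ∩ closedBall p r), ⟪z, u⟫ = ⟪p, u⟫ := by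
    rintro _ ⟨x, -, rfl⟩
    rw [← sub_eq_zero, ← inner_sub_left, inner_hyperplaneProj_sub hu]
  calc volume (K ∩ closedBall p r)
      ≤ volume (image2 (fun z t => z + t • u)
          (hyperplaneProj p u '' (frontier K ∩ closedBall p r)) (Icc 0 r)) :=
        measure_mono (inter_closedBall_subset_image2_hyperplaneProj_frontier hu hKu r)
    _ ≤ ENNReal.ofReal r * μH[n] (hyperplaneProj p u '' (frontier K ∩ closedBall p r)) :=
        volume_image2_add_smul_le hE hu hA r
    _ ≤ ENNReal.ofReal r * μH[n] (frontier K ∩ closedBall p r) := by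
        gcongr _ * ?_
        simpa using (lipschitzWith_hyperplaneProj hu).hausdorffMeasure_image_le
          (Nat.cast_nonneg n) _

theorem hausdorffMeasure_lt_top_of_subset_hyperplane (hE : finrank ℝ E = n + 1) {u : E}
    (hu : u ≠ 0) {c : ℝ} {S : Set E} (hS : Bornology.IsBounded S)
    (hSu : ∀ x ∈ S, ⟪x, u⟫ = c) : μH[n] S < ⊤ := by
  rcases S.eq_empty_or_nonempty with rfl | ⟨q, hq⟩
  · simp
  have : Fact (finrank ℝ E = n + 1) := ⟨hE⟩
  set W := (ℝ ∙ u)ᗮ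
  have hW : finrank ℝ W = n := Submodule.finrank_orthogonal_span_singleton hu
  set f : W → E := fun w => (w : E) + q
  have hf : Isometry f := (IsometryEquiv.addRight q).isometry.comp isometry_subtype_coe
  obtain ⟨R, hR⟩ := hS.subset_closedBall q
  have hsub : S ⊆ f '' closedBall 0 R := fun x hx =>
    ⟨⟨x - q, Submodule.mem_orthogonal_singleton_iff_inner_right.2 (by
      rw [inner_sub_right, real_inner_comm, hSu x hx, real_inner_comm, hSu q hq, sub_self])⟩,
      by simpa [dist_eq_norm] using hR hx, by simp [f]⟩
  calc μH[n] S ≤ μH[n] (f '' closedBall 0 R) := measure_mono hsub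
    _ = μH[n] (closedBall (0 : W) R) := hf.hausdorffMeasure_image (Or.inl n.cast_nonneg) _
    _ < ⊤ := by
      rw [← hW]
      exact (isCompact_closedBall _ _).measure_lt_top

end FiniteDimensional

section Voronoi

variable {d k : ℕ} (β : Fin k → EuclideanSpace ℝ (Fin d))

theorem isClosed_voronoi (j : Fin k) : IsClosed (voronoi d k β j) := by
  simp only [voronoi, ofPred_forall]
  exact isClosed_iInter fun l => isClosed_le (by fun_prop) (by fun_prop)

theorem exists_norm_sub_le_of_notMem_interior_voronoi {j : Fin k}
    {x : EuclideanSpace ℝ (Fin d)} (hx : x ∉ interior (voronoi d k β j)) :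
    ∃ l, β l ≠ β j ∧ ‖x - β l‖ ≤ ‖x - β j‖ := by
  contrapose! hx
  rw [mem_interior_iff_mem_nhds]
  refine Filter.eventually_all.2 fun l => ?_
  by_cases hl : β l = β j
  · simp [hl]
  · have hopen : IsOpen {y : EuclideanSpace ℝ (Fin d) | ‖y - β j‖ < ‖y - β l‖} :=
      isOpen_lt (by fun_prop) (by fun_prop)
    exact Filter.mem_of_superset (hopen.mem_nhds (hx l hl)) fun y hy =>
      (show ‖y - β j‖ < ‖y - β l‖ from hy).le

theorem frontier_voronoi_subset (j : Fin k) :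
    frontier (voronoi d k β j) ⊆ ⋃ (l) (_ : β l ≠ β j), vorBoundary d k β j l := by
  intro x hx
  rw [(isClosed_voronoi β j).frontier_eq] at hx
  obtain ⟨l, hl, hle⟩ := exists_norm_sub_le_of_notMem_interior_voronoi β hx.2
  exact mem_iUnion₂.2 ⟨l, hl, Or.inl hx.1, le_antisymm (hx.1 l) hle⟩

theorem exists_mem_voronoi [Nonempty (Fin k)] (x : EuclideanSpace ℝ (Fin d)) :
    ∃ j, x ∈ voronoi d k β j := by
  obtain ⟨j, hj⟩ := Finite.exists_min fun j => ‖x - β j‖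
  exact ⟨j, hj⟩

end Voronoi

section VoronoiCells

variable {n k : ℕ} (β : Fin k → EuclideanSpace ℝ (Fin (n + 1)))

theorem volume_voronoi_inter_closedBall_le {j l : Fin k} (hne : β l ≠ β j)
    {p : EuclideanSpace ℝ (Fin (n + 1))} (hp : ‖p - β l‖ ≤ ‖p - β j‖) (r : ℝ) :
    volume (voronoi (n + 1) k β j ∩ closedBall p r) ≤
      ENNReal.ofReal r * μH[n] (frontier (voronoi (n + 1) k β j) ∩ closedBall p r) := by
  have hu : ‖‖β j - β l‖⁻¹ • (β j - β l)‖ = 1 := by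
    rw [norm_smul, norm_inv, norm_norm,
      inv_mul_cancel₀ (norm_ne_zero_iff.2 (sub_ne_zero.2 hne.symm))]
  refine volume_inter_closedBall_le_of_subset_halfspace finrank_euclideanSpace_fin hu
    (fun x hx => ?_) r
  rw [real_inner_smul_right]
  exact mul_nonneg (inv_nonneg.2 (norm_nonneg _)) (inner_sub_sub_nonneg_of_norm_sub_le (hx l) hp)

theorem hausdorffMeasure_vorBoundary_inter_closedBall_lt_top {j l : Fin k} (hne : β l ≠ β j)
    (p : EuclideanSpace ℝ (Fin (n + 1))) (r : ℝ) :
    μH[n] (vorBoundary (n + 1) k β j l ∩ closedBall p r) < ⊤ :=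
  hausdorffMeasure_lt_top_of_subset_hyperplane finrank_euclideanSpace_fin (sub_ne_zero.2 hne)
    (isBounded_closedBall.subset inter_subset_right)
    fun _ hx => inner_sub_eq_of_norm_sub_eq hx.1.2

end VoronoiCells

section BoundaryMass

variable {n k : ℕ}

def VorBoundaryMassLE (β : Fin k → EuclideanSpace ℝ (Fin (n + 1)))
    (p : EuclideanSpace ℝ (Fin (n + 1))) (r : ℝ) (m : ℝ≥0∞) : Prop :=
  ∀ j l, β l ≠ β j → μH[n] (vorBoundary (n + 1) k β j l ∩ closedBall p r) ≤ m

variable {β : Fin k → EuclideanSpace ℝ (Fin (n + 1))} {p : EuclideanSpace ℝ (Fin (n + 1))}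
  {r : ℝ} {m : ℝ≥0∞}

theorem hausdorffMeasure_frontier_voronoi_inter_closedBall_le (hm : VorBoundaryMassLE β p r m)
    (j : Fin k) :
    μH[n] (frontier (voronoi (n + 1) k β j) ∩ closedBall p r) ≤ k * m := by
  classical
  set L := Finset.univ.filter fun l => β l ≠ β j
  have hsub : frontier (voronoi (n + 1) k β j) ∩ closedBall p r ⊆
      ⋃ l ∈ L, vorBoundary (n + 1) k β j l ∩ closedBall p r := by
    rintro x ⟨hx, hxB⟩
    obtain ⟨l, hl, hxl⟩ := mem_iUnion₂.1 (frontier_voronoi_subset β j hx)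
    exact mem_biUnion (Finset.mem_filter.2 ⟨Finset.mem_univ l, hl⟩) ⟨hxl, hxB⟩
  calc μH[n] (frontier (voronoi (n + 1) k β j) ∩ closedBall p r)
      ≤ ∑ l ∈ L, μH[n] (vorBoundary (n + 1) k β j l ∩ closedBall p r) :=
        (measure_mono hsub).trans (measure_biUnion_finset_le _ _)
    _ ≤ ∑ _l ∈ L, m := Finset.sum_le_sum fun l hl => hm j l (Finset.mem_filter.1 hl).2
    _ ≤ ∑ _l : Fin k, m := Finset.sum_le_sum_of_subset (Finset.filter_subset _ _)
    _ = k * m := by simp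

theorem volume_voronoi_inter_closedBall_le_of_norm_sub_le (hm : VorBoundaryMassLE β p r m)
    {j l : Fin k} (hne : β l ≠ β j)
    (hp : ‖p - β l‖ ≤ ‖p - β j‖) :
    volume (voronoi (n + 1) k β j ∩ closedBall p r) ≤ ENNReal.ofReal r * (k * m) :=
  (volume_voronoi_inter_closedBall_le β hne hp r).trans
    (by gcongr; exact hausdorffMeasure_frontier_voronoi_inter_closedBall_le hm j)

theorem volume_voronoi_inter_closedBall_le_of_notMem_interior (hm : VorBoundaryMassLE β p r m)
    {i : Fin k}
    (hp : p ∉ interior (voronoi (n + 1) k β i)) :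
    volume (voronoi (n + 1) k β i ∩ closedBall p r) ≤ ENNReal.ofReal r * (k * m) := by
  obtain ⟨l, hne, hle⟩ := exists_norm_sub_le_of_notMem_interior_voronoi β hp
  exact volume_voronoi_inter_closedBall_le_of_norm_sub_le hm hne hle

theorem volume_closedBall_diff_voronoi_le (hm : VorBoundaryMassLE β p r m) {i : Fin k}
    (hp : p ∈ interior (voronoi (n + 1) k β i)) :
    volume (closedBall p r \ voronoi (n + 1) k β i) ≤ k * (ENNReal.ofReal r * (k * m)) := by
  classical
  have : Nonempty (Fin k) := ⟨i⟩
  set J := Finset.univ.filter fun j => β j ≠ β i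
  have hsub : closedBall p r \ voronoi (n + 1) k β i ⊆
      ⋃ j ∈ J, voronoi (n + 1) k β j ∩ closedBall p r := by
    rintro x ⟨hxB, hxi⟩
    obtain ⟨j, hxj⟩ := exists_mem_voronoi β x
    have hne : β j ≠ β i := fun h => hxi fun l => h ▸ hxj l
    exact mem_biUnion (Finset.mem_filter.2 ⟨Finset.mem_univ j, hne⟩) ⟨hxj, hxB⟩
  calc volume (closedBall p r \ voronoi (n + 1) k β i)
      ≤ ∑ j ∈ J, volume (voronoi (n + 1) k β j ∩ closedBall p r) :=
        (measure_mono hsub).trans (measure_biUnion_finset_le _ _)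
    _ ≤ ∑ _j ∈ J, ENNReal.ofReal r * (k * m) := Finset.sum_le_sum fun j hj =>
        volume_voronoi_inter_closedBall_le_of_norm_sub_le hm (Finset.mem_filter.1 hj).2.symm
          (interior_subset hp j)
    _ ≤ ∑ _j : Fin k, ENNReal.ofReal r * (k * m) :=
        Finset.sum_le_sum_of_subset (Finset.filter_subset _ _)
    _ = k * (ENNReal.ofReal r * (k * m)) := by simp

end BoundaryMass

theorem setIntegral_unifBallDensity {d : ℕ} (V : Set (EuclideanSpace ℝ (Fin d)))
    (c : EuclideanSpace ℝ (Fin d)) (r : ℝ) :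
    ∫ x in V, unifBallDensity d c r x =
      (volume (V ∩ closedBall c r) / volume (closedBall c r)).toReal := by
  unfold unifBallDensity
  rw [setIntegral_indicator measurableSet_closedBall, setIntegral_const, smul_eq_mul,
    ENNReal.toReal_div, measureReal_def, div_eq_mul_inv]

theorem one_sub_le_toReal_measure_inter_div {α : Type*} [MeasurableSpace α] {μ : Measure α}
    {s t : Set α} (hs0 : μ s ≠ 0) (hs : μ s ≠ ⊤) (ht : MeasurableSet t) {x : ℝ} (hx : 0 ≤ x)
    (h : μ (s \ t) ≤ ENNReal.ofReal x * μ s) :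
    1 - x ≤ (μ (t ∩ s) / μ s).toReal := by
  have hsplit : μ.real (t ∩ s) + μ.real (s \ t) = μ.real s := by
    rw [inter_comm, measureReal_inter_add_sdiff ht hs]
  have hdiff : μ.real (s \ t) ≤ x * μ.real s := by
    have := ENNReal.toReal_mono (ENNReal.mul_ne_top ENNReal.ofReal_ne_top hs) h
    rwa [ENNReal.toReal_mul, ENNReal.toReal_ofReal hx] at this
  have hpos : 0 < μ.real s := ENNReal.toReal_pos hs0 hs
  rw [ENNReal.toReal_div, ← measureReal_def, ← measureReal_def, le_div_iff₀ hpos]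
  linarith

/-- `rhoBoundary` takes `toReal`, which sends an infinite mass to `0`; the bound survives the
passage back to `ℝ≥0∞` because a Voronoi boundary lies in a hyperplane. -/
theorem hausdorffMeasure_vorBoundary_le_of_rhoBoundary_le {n k : ℕ}
    {βstar β : Fin k → EuclideanSpace ℝ (Fin (n + 1))} {r lam : ℝ} (hr : 0 < r) {s j l : Fin k}
    (hne : β l ≠ β j) (h : rhoBoundary (n + 1) k βstar r β s j l ≤ lam) :
    μH[n] (vorBoundary (n + 1) k β j l ∩ closedBall (βstar s) r) ≤
      ENNReal.ofReal lam * volume (closedBall (βstar s) r) := by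
  have hdim : ((n + 1 : ℕ) : ℝ) - 1 = n := by push_cast; ring
  have hball : (volume (ball (0 : EuclideanSpace ℝ (Fin (n + 1))) 1)).toReal * r ^ (n + 1) =
      (volume (closedBall (βstar s) r)).toReal := by
    rw [Measure.addHaar_closedBall _ _ hr.le, finrank_euclideanSpace_fin,
      ENNReal.toReal_mul, ENNReal.toReal_ofReal (by positivity)]
    ring
  rw [rhoBoundary, hdim, hball, div_le_iff₀ (ENNReal.toReal_pos
    (measure_closedBall_pos _ _ hr).ne' measure_closedBall_lt_top.ne)] at h
  rw [← ENNReal.ofReal_toReal (hausdorffMeasure_vorBoundary_inter_closedBall_lt_top β hne _ r).ne,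
    ← ENNReal.ofReal_toReal (measure_closedBall_lt_top (x := βstar s) (r := r)).ne,
    ← ENNReal.ofReal_mul' ENNReal.toReal_nonneg]
  exact ENNReal.ofReal_le_ofReal h

theorem ball_family_bounds_part2_mass_general (d k : ℕ) (hd : 1 ≤ d)
    (βstar : Fin k → EuclideanSpace ℝ (Fin d))
    (r : ℝ) (hr : 0 < r)
    (β : Fin k → EuclideanSpace ℝ (Fin d))
    (lam : ℝ) (hlam : 0 < lam) (i : Fin k) (s : Fin k)
    (hrho : ∀ j l : Fin k, j ≠ l → rhoBoundary d k βstar r β s j l ≤ lam) :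
    (s ∈ Aset d k βstar r β i →
      1 - (k : ℝ) ^ 2 * lam * r ≤
        ∫ x in voronoi d k β i, unifBallDensity d (βstar s) r x) ∧
    (s ∉ Aset d k βstar r β i →
      (∫ x in voronoi d k β i, unifBallDensity d (βstar s) r x) ≤ k * lam * r) := by
  obtain ⟨n, rfl⟩ : ∃ n, d = n + 1 := ⟨d - 1, by omega⟩
  set B := closedBall (βstar s) r
  have hB0 : volume B ≠ 0 := (measure_closedBall_pos _ _ hr).ne'
  have hBtop : volume B ≠ ⊤ := measure_closedBall_lt_top.ne
  have hm : VorBoundaryMassLE β (βstar s) r (ENNReal.ofReal lam * volume B) := fun j l hne =>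
    hausdorffMeasure_vorBoundary_le_of_rhoBoundary_le hr hne (hrho j l fun h => hne (h ▸ rfl))
  rw [setIntegral_unifBallDensity]
  refine ⟨fun hA => ?_, fun hA => ?_⟩
  · refine one_sub_le_toReal_measure_inter_div hB0 hBtop (isClosed_voronoi β i).measurableSet
      (by positivity) ((volume_closedBall_diff_voronoi_le hm hA).trans_eq ?_)
    rw [ENNReal.ofReal_mul (by positivity), ENNReal.ofReal_mul (by positivity),
      ENNReal.ofReal_pow (by positivity), ENNReal.ofReal_natCast]
    ring
  · refine ENNReal.toReal_le_of_le_ofReal (by positivity) (ENNReal.div_le_of_le_mul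
      ((volume_voronoi_inter_closedBall_le_of_notMem_interior hm hA).trans_eq ?_))
    rw [ENNReal.ofReal_mul (by positivity), ENNReal.ofReal_mul (by positivity),
      ENNReal.ofReal_natCast]
    ring

/-- Family of bounds for the ball model, Part 2 (mass bounds): if every Voronoi boundary
enclosed by the true cluster `B_s` (for `s ∈ T_i`) has relative volume at most `λ`, then
`P_s(V_i(β)) ≥ 1 − k²λr` when `s ∈ A_i`, and `P_s(V_i(β)) ≤ kλr` when `s ∈ T_i \ A_i`. -/
theorem ball_family_bounds_part2_mass (d k : ℕ) (hd : 1 ≤ d) (hk : 2 ≤ k)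
    (βstar : Fin k → EuclideanSpace ℝ (Fin d)) (hinj : Function.Injective βstar)
    (r : ℝ) (hr : 0 < r)
    (hdisj : Pairwise fun s s' : Fin k =>
      Disjoint (Metric.closedBall (βstar s) r) (Metric.closedBall (βstar s') r))
    (β : Fin k → EuclideanSpace ℝ (Fin d))
    (hmin : IsLocalMin (kmeansObj d k (ballMixDensity d k βstar r)) β)
    (lam : ℝ) (hlam : 0 < lam) (i : Fin k) (s : Fin k)
    (hs : s ∈ Tset d k βstar r β i)
    (hrho : ∀ j l : Fin k, j ≠ l → rhoBoundary d k βstar r β s j l ≤ lam) :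
    (s ∈ Aset d k βstar r β i →
      1 - (k : ℝ) ^ 2 * lam * r ≤
        ∫ x in voronoi d k β i, unifBallDensity d (βstar s) r x) ∧
    (s ∉ Aset d k βstar r β i →
      (∫ x in voronoi d k β i, unifBallDensity d (βstar s) r x) ≤ k * lam * r) :=
  ball_family_bounds_part2_mass_general d k hd βstar r hr β lam hlam i s hrho
end
end

section
/- (Directional derivative of the population k-means objective.) Under the Stochastic Ball Model, let β = (β_1, …, β_k) ∈ (ℝ^d)^k have pairwise distinct components (β_i ≠ β_j whenever i ≠ j), and let v = (v_1, …, v_k) ∈ (ℝ^d)^k be any direction. Then the function H^v(t) := G(β + tv) is differentiable at t = 0 and its derivative equals −Σ_{i=1}^k ∫_{V_i(β)} 2⟨v_i, x − β_i⟩ f(x) dx. -/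
/-!
Off the perpendicular bisectors of the centers `β i`, a Lebesgue-null set, every point `x` has
a unique nearest center `β i`. Near `t = 0` the integrand `min_j ‖x - β j - t v j‖² f x` then
coincides with `‖x - β i - t v i‖² f x`, whose derivative at `0` is `-2 ⟪v i, x - β i⟫ f x`.
For `|t| < 1` the integrand is Lipschitz in `t` with constant `O((1 + ‖x‖) |f x|)`, which is
integrable as soon as `f` has a finite second moment, so differentiation under the integral sign
applies; integrating the a.e. derivative cell by cell gives the Voronoi sum.
-/

open MeasureTheory Metric Set
open scoped RealInnerProductSpace

noncomputable section

open Topology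

theorem abs_ciInf_sub_ciInf_le {ι : Type*} [Finite ι] [Nonempty ι] {a b : ι → ℝ} {L : ℝ}
    (h : ∀ j, |a j - b j| ≤ L) : |(⨅ j, a j) - ⨅ j, b j| ≤ L := by
  have key : ∀ a b : ι → ℝ, (∀ j, |a j - b j| ≤ L) → (⨅ j, a j) - ⨅ j, b j ≤ L := by
    refine fun a b h => sub_le_comm.1 (le_ciInf fun j => ?_)
    linarith [ciInf_le (Set.finite_range a).bddBelow j, (abs_sub_le_iff.1 (h j)).1]
  exact abs_sub_le_iff.2 ⟨key a b h, key b a fun j => abs_sub_comm (a j) (b j) ▸ h j⟩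

theorem abs_norm_sub_smul_sq_sub_le {E : Type*} [NormedAddCommGroup E] [InnerProductSpace ℝ E]
    (a w : E) {s t : ℝ} (hs : |s| ≤ 1) (ht : |t| ≤ 1) :
    |‖a - t • w‖ ^ 2 - ‖a - s • w‖ ^ 2| ≤ 2 * ‖w‖ * (‖a‖ + ‖w‖) * |t - s| := by
  have expand : ∀ u : ℝ, ‖a - u • w‖ ^ 2 = ‖a‖ ^ 2 - 2 * u * ⟪a, w⟫ + u ^ 2 * ‖w‖ ^ 2 := by
    intro u
    rw [norm_sub_sq_real, inner_smul_right, norm_smul, mul_pow, Real.norm_eq_abs, sq_abs]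
    ring
  have hinner : |⟪a, w⟫| ≤ ‖a‖ * ‖w‖ := abs_real_inner_le_norm a w
  have hsum : |t + s| ≤ 2 := (abs_add_le t s).trans (by linarith)
  calc |‖a - t • w‖ ^ 2 - ‖a - s • w‖ ^ 2|
      = |t - s| * |(t + s) * ‖w‖ ^ 2 - 2 * ⟪a, w⟫| := by
        rw [expand, expand, ← abs_mul]; ring_nf
    _ ≤ |t - s| * (2 * ‖w‖ ^ 2 + 2 * (‖a‖ * ‖w‖)) := by
        gcongr
        refine (abs_sub _ _).trans (add_le_add ?_ ?_)
        · rw [abs_mul, abs_of_nonneg (sq_nonneg ‖w‖)]; gcongr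
        · rw [abs_mul, abs_two]; gcongr
    _ = 2 * ‖w‖ * (‖a‖ + ‖w‖) * |t - s| := by ring

theorem hasDerivAt_norm_sub_smul_sq {E : Type*} [NormedAddCommGroup E] [InnerProductSpace ℝ E]
    (a w : E) : HasDerivAt (fun t : ℝ => ‖a - t • w‖ ^ 2) (-(2 * ⟪w, a⟫)) 0 := by
  simpa [real_inner_comm] using ((hasDerivAt_id (0 : ℝ)).smul_const w).const_sub a |>.norm_sq

theorem hasDerivAt_ciInf_of_lt {ι : Type*} [Finite ι] {g : ι → ℝ → ℝ} {i : ι} {t₀ g' : ℝ}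
    (hcont : ∀ j, ContinuousAt (g j) t₀) (hlt : ∀ j ≠ i, g i t₀ < g j t₀)
    (hderiv : HasDerivAt (g i) g' t₀) : HasDerivAt (fun t => ⨅ j, g j t) g' t₀ := by
  have : Nonempty ι := ⟨i⟩
  have hmin : ∀ᶠ t in 𝓝 t₀, ∀ j, g i t ≤ g j t := by
    refine Filter.eventually_all.2 fun j => ?_
    rcases eq_or_ne j i with rfl | hj
    · exact Filter.Eventually.of_forall fun _ => le_rfl
    · exact ((hcont i).eventually_lt (hcont j) (hlt j hj)).mono fun _ => le_of_lt
  refine hderiv.congr_of_eventuallyEq (hmin.mono fun t ht => ?_)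
  exact le_antisymm (ciInf_le (Set.finite_range _).bddBelow i) (le_ciInf ht)

section Moments

variable {E : Type*} [NormedAddCommGroup E] [MeasurableSpace E] [BorelSpace E]
  {μ : Measure E} {f : E → ℝ}

theorem integrable_of_abs_le_quadratic_mul (hf : Integrable f μ)
    (hf₂ : Integrable (fun x => ‖x‖ ^ 2 * f x) μ) {g : E → ℝ} (hg : AEStronglyMeasurable g μ)
    {a b c : ℝ} (hle : ∀ x, |g x| ≤ (a + b * ‖x‖ + c * ‖x‖ ^ 2) * |f x|) : Integrable g μ := by
  have hf₁ : Integrable (fun x => ‖x‖ * f x) μ := by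
    refine (hf.norm.add hf₂.norm).mono' (continuous_norm.aestronglyMeasurable.mul hf.1)
      (.of_forall fun x => ?_)
    simp only [Pi.add_apply, norm_mul, norm_pow, Real.norm_eq_abs, abs_norm]
    nlinarith [mul_nonneg (abs_nonneg (f x)) (sq_nonneg (‖x‖ - 1)),
      mul_nonneg (abs_nonneg (f x)) (norm_nonneg x)]
  refine (((hf.norm.const_mul a).add (hf₁.norm.const_mul b)).add (hf₂.norm.const_mul c)).mono' hg
    (.of_forall fun x => (Real.norm_eq_abs (g x)).trans_le ((hle x).trans_eq ?_))
  simp only [Pi.add_apply, norm_mul, norm_pow, Real.norm_eq_abs, abs_norm]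
  ring

theorem integrable_iInf_norm_sub_sq_mul {ι : Type*} [Finite ι] [Nonempty ι]
    (hf : Integrable f μ) (hf₂ : Integrable (fun x => ‖x‖ ^ 2 * f x) μ) (β : ι → E) :
    Integrable (fun x => (⨅ j, ‖x - β j‖ ^ 2) * f x) μ := by
  obtain ⟨j₀⟩ := ‹Nonempty ι›
  refine integrable_of_abs_le_quadratic_mul hf hf₂
    ((Measurable.iInf fun j => by fun_prop).aestronglyMeasurable.mul hf.1)
    (a := ‖β j₀‖ ^ 2) (b := 2 * ‖β j₀‖) (c := 1) fun x => ?_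
  have hnonneg : 0 ≤ ⨅ j, ‖x - β j‖ ^ 2 := le_ciInf fun j => by positivity
  rw [abs_mul, abs_of_nonneg hnonneg]
  refine mul_le_mul_of_nonneg_right ?_ (abs_nonneg _)
  calc ⨅ j, ‖x - β j‖ ^ 2 ≤ ‖x - β j₀‖ ^ 2 := ciInf_le (Set.finite_range _).bddBelow j₀
    _ ≤ (‖x‖ + ‖β j₀‖) ^ 2 := by gcongr; exact norm_sub_le _ _
    _ = ‖β j₀‖ ^ 2 + 2 * ‖β j₀‖ * ‖x‖ + 1 * ‖x‖ ^ 2 := by ring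

theorem integrable_sum_norm_mul_norm_add_mul_abs {ι : Type*} [Fintype ι] (hf : Integrable f μ)
    (hf₂ : Integrable (fun x => ‖x‖ ^ 2 * f x) μ) (β v : ι → E) :
    Integrable (fun x => (∑ j, 2 * ‖v j‖ * (‖x‖ + ‖β j‖ + ‖v j‖)) * |f x|) μ := by
  simp only [Finset.sum_mul]
  refine integrable_finsetSum _ fun j _ => integrable_of_abs_le_quadratic_mul hf hf₂
    ((Continuous.aestronglyMeasurable (by fun_prop)).mul hf.1.norm)
    (a := 2 * ‖v j‖ * (‖β j‖ + ‖v j‖)) (b := 2 * ‖v j‖) (c := 0) fun x => le_of_eq ?_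
  rw [abs_of_nonneg (by positivity)]
  ring

end Moments

section Nearest

variable {E : Type*} [NormedAddCommGroup E] {ι : Type*}

theorem isClosed_setOf_forall_norm_sub_le (β : ι → E) (i : ι) :
    IsClosed {x : E | ∀ j, ‖x - β i‖ ≤ ‖x - β j‖} := by
  simp only [ofPred_forall]
  exact isClosed_iInter fun j => isClosed_le (by fun_prop) (by fun_prop)

theorem sum_indicator_setOf_forall_norm_sub_le [Fintype ι] {β : ι → E} {x : E} {i : ι}
    (hi : ∀ j ≠ i, ‖x - β i‖ < ‖x - β j‖) (g : ι → E → ℝ) :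
    ∑ j, {y | ∀ l, ‖y - β j‖ ≤ ‖y - β l‖}.indicator (g j) x = g i x := by
  refine (Fintype.sum_eq_single i fun j hj => indicator_of_notMem
    (fun hx => (hx i).not_gt (hi j hj)) _).trans (indicator_of_mem ?_ _)
  intro j
  rcases eq_or_ne j i with rfl | hj
  · exact le_rfl
  · exact (hi j hj).le

variable [InnerProductSpace ℝ E] [FiniteDimensional ℝ E] [MeasurableSpace E] [BorelSpace E]
  (μ : Measure E) [μ.IsAddHaarMeasure]

theorem measure_setOf_norm_sub_eq_norm_sub {a b : E} (hab : a ≠ b) :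
    μ {x | ‖x - a‖ = ‖x - b‖} = 0 := by
  have hbisector : {x | ‖x - a‖ = ‖x - b‖} = (AffineSubspace.perpBisector a b : Set E) := by
    ext x
    simp only [mem_ofPred_eq, SetLike.mem_coe, AffineSubspace.mem_perpBisector_iff_dist_eq,
      dist_eq_norm]
  rw [hbisector]
  exact Measure.addHaar_affineSubspace μ _ (by simpa using hab)

theorem ae_exists_forall_ne_norm_sub_lt [Finite ι] [Nonempty ι] {β : ι → E}
    (hβ : Function.Injective β) : ∀ᵐ x ∂μ, ∃ i, ∀ j ≠ i, ‖x - β i‖ < ‖x - β j‖ := by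
  have hties : ∀ᵐ x ∂μ, ∀ i j, i ≠ j → ‖x - β i‖ ≠ ‖x - β j‖ := by
    refine ae_all_iff.2 fun i => ae_all_iff.2 fun j => ?_
    rcases eq_or_ne i j with rfl | hij
    · exact .of_forall fun _ h => (h rfl).elim
    · filter_upwards [measure_eq_zero_iff_ae_notMem.1
        (measure_setOf_norm_sub_eq_norm_sub μ (hβ.ne hij))] with x hx _ using hx
  filter_upwards [hties] with x hx
  obtain ⟨i, hi⟩ := Finite.exists_min fun j => ‖x - β j‖
  exact ⟨i, fun j hj => (hi j).lt_of_ne (hx i j hj.symm)⟩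

end Nearest

section KMeans

variable {E : Type*} [NormedAddCommGroup E] [InnerProductSpace ℝ E] {ι : Type*} [Fintype ι]

theorem lipschitzOnWith_iInf_norm_sub_smul_sq_mul [Nonempty ι] (x : E) (β v : ι → E) (c : ℝ) :
    LipschitzOnWith (Real.nnabs ((∑ j, 2 * ‖v j‖ * (‖x‖ + ‖β j‖ + ‖v j‖)) * |c|))
      (fun t : ℝ => (⨅ j, ‖x - (β j + t • v j)‖ ^ 2) * c) (Metric.ball 0 1) := by
  refine LipschitzOnWith.of_dist_le_mul fun t ht s hs => ?_
  rw [mem_ball_zero_iff, Real.norm_eq_abs] at ht hs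
  have hterm : ∀ j, |‖x - (β j + t • v j)‖ ^ 2 - ‖x - (β j + s • v j)‖ ^ 2|
      ≤ (∑ l, 2 * ‖v l‖ * (‖x‖ + ‖β l‖ + ‖v l‖)) * |t - s| := by
    intro j
    simp only [← sub_sub]
    refine (abs_norm_sub_smul_sq_sub_le _ _ hs.le ht.le).trans (mul_le_mul_of_nonneg_right ?_
      (abs_nonneg _))
    calc 2 * ‖v j‖ * (‖x - β j‖ + ‖v j‖) ≤ 2 * ‖v j‖ * (‖x‖ + ‖β j‖ + ‖v j‖) := by
          gcongr; exact norm_sub_le x (β j)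
      _ ≤ ∑ l, 2 * ‖v l‖ * (‖x‖ + ‖β l‖ + ‖v l‖) :=
          Finset.single_le_sum (f := fun l => 2 * ‖v l‖ * (‖x‖ + ‖β l‖ + ‖v l‖))
            (fun l _ => by positivity) (Finset.mem_univ j)
  rw [Real.dist_eq, Real.dist_eq, Real.coe_nnabs, ← sub_mul, abs_mul, abs_mul, abs_abs,
    abs_of_nonneg (by positivity : (0 : ℝ) ≤ ∑ l, 2 * ‖v l‖ * (‖x‖ + ‖β l‖ + ‖v l‖)),
    mul_right_comm]
  exact mul_le_mul_of_nonneg_right (abs_ciInf_sub_ciInf_le hterm) (abs_nonneg c)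

theorem hasDerivAt_iInf_norm_sub_smul_sq {β : ι → E} {x : E} {i : ι}
    (hi : ∀ j ≠ i, ‖x - β i‖ < ‖x - β j‖) (v : ι → E) :
    HasDerivAt (fun t : ℝ => ⨅ j, ‖x - (β j + t • v j)‖ ^ 2) (-(2 * ⟪v i, x - β i⟫)) 0 := by
  refine hasDerivAt_ciInf_of_lt (i := i) (fun j => by fun_prop) (fun j hj => ?_) ?_
  · simpa using pow_lt_pow_left₀ (hi j hj) (norm_nonneg _) two_ne_zero
  · simpa only [← sub_sub] using hasDerivAt_norm_sub_smul_sq (x - β i) (v i)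

variable [MeasurableSpace E] [BorelSpace E] {μ : Measure E} {f : E → ℝ}

theorem integrable_inner_sub_mul (hf : Integrable f μ)
    (hf₂ : Integrable (fun x => ‖x‖ ^ 2 * f x) μ) (w b : E) :
    Integrable (fun x => 2 * ⟪w, x - b⟫ * f x) μ := by
  refine integrable_of_abs_le_quadratic_mul hf hf₂
    ((Continuous.aestronglyMeasurable (by fun_prop)).mul hf.1)
    (a := 2 * ‖w‖ * ‖b‖) (b := 2 * ‖w‖) (c := 0) fun x => ?_
  rw [abs_mul, abs_mul, abs_two]
  refine mul_le_mul_of_nonneg_right ?_ (abs_nonneg _)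
  calc 2 * |⟪w, x - b⟫| ≤ 2 * (‖w‖ * (‖x‖ + ‖b‖)) := by
        gcongr
        exact (abs_real_inner_le_norm w _).trans (by gcongr; exact norm_sub_le x b)
    _ = 2 * ‖w‖ * ‖b‖ + 2 * ‖w‖ * ‖x‖ + 0 * ‖x‖ ^ 2 := by ring

end KMeans

theorem hasDerivAt_integral_iInf_norm_sub_smul_sq_mul {E : Type*} [NormedAddCommGroup E]
    [InnerProductSpace ℝ E] [FiniteDimensional ℝ E] [MeasurableSpace E] [BorelSpace E]
    (μ : Measure E) [μ.IsAddHaarMeasure] {ι : Type*} [Fintype ι] {f : E → ℝ}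
    (hf : Integrable f μ) (hf₂ : Integrable (fun x => ‖x‖ ^ 2 * f x) μ) {β : ι → E}
    (hβ : Function.Injective β) (v : ι → E) :
    HasDerivAt (fun t : ℝ => ∫ x, (⨅ j, ‖x - (β j + t • v j)‖ ^ 2) * f x ∂μ)
      (-∑ i, ∫ x in {x | ∀ j, ‖x - β i‖ ≤ ‖x - β j‖}, 2 * ⟪v i, x - β i⟫ * f x ∂μ) 0 := by
  rcases isEmpty_or_nonempty ι with hι | hι
  · simpa using hasDerivAt_const (0 : ℝ) (0 : ℝ)
  have hcell (i : ι) : MeasurableSet {x : E | ∀ j, ‖x - β i‖ ≤ ‖x - β j‖} :=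
    (isClosed_setOf_forall_norm_sub_le β i).measurableSet
  have hterm (i : ι) : Integrable ({x | ∀ j, ‖x - β i‖ ≤ ‖x - β j‖}.indicator
      fun x => 2 * ⟪v i, x - β i⟫ * f x) μ :=
    (integrable_inner_sub_mul hf hf₂ (v i) (β i)).indicator (hcell i)
  have hderiv_ae : ∀ᵐ x ∂μ, HasDerivAt (fun t : ℝ => (⨅ j, ‖x - (β j + t • v j)‖ ^ 2) * f x)
      (-∑ i, {x | ∀ j, ‖x - β i‖ ≤ ‖x - β j‖}.indicator
        (fun x => 2 * ⟪v i, x - β i⟫ * f x) x) 0 := by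
    filter_upwards [ae_exists_forall_ne_norm_sub_lt μ hβ] with x ⟨i, hi⟩
    rw [sum_indicator_setOf_forall_norm_sub_le hi, ← neg_mul]
    exact (hasDerivAt_iInf_norm_sub_smul_sq hi v).mul_const (f x)
  obtain ⟨-, hderiv⟩ := hasDerivAt_integral_of_dominated_loc_of_lip (ball_mem_nhds 0 one_pos)
    (.of_forall fun t => (integrable_iInf_norm_sub_sq_mul hf hf₂ _).aestronglyMeasurable)
    (integrable_iInf_norm_sub_sq_mul hf hf₂ _)
    (integrable_finsetSum _ fun i _ => hterm i).neg.aestronglyMeasurable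
    (.of_forall fun x => lipschitzOnWith_iInf_norm_sub_smul_sq_mul x β v (f x))
    (integrable_sum_norm_mul_norm_add_mul_abs hf hf₂ β v) hderiv_ae
  simp only [Pi.neg_apply] at hderiv
  rwa [integral_neg, integral_finsetSum _ fun i _ => hterm i,
    Finset.sum_congr rfl fun i _ => integral_indicator (hcell i)] at hderiv

theorem integrable_mul_ballMixDensity {d k : ℕ} (βstar : Fin k → EuclideanSpace ℝ (Fin d))
    (r : ℝ) {g : EuclideanSpace ℝ (Fin d) → ℝ} (hg : Continuous g) :
    Integrable (fun x => g x * ballMixDensity d k βstar r x) := by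
  simp only [ballMixDensity, unifBallDensity, Finset.mul_sum, mul_left_comm (g _),
    ← indicator_mul_right]
  refine integrable_finsetSum _ fun s _ =>
    ((integrable_indicator_iff measurableSet_closedBall).2 ?_).const_mul _
  exact (hg.mul continuous_const).continuousOn.integrableOn_compact (isCompact_closedBall _ _)

theorem directional_derivative_kmeans_general (d k : ℕ)
    (βstar : Fin k → EuclideanSpace ℝ (Fin d))
    (r : ℝ)
    (β v : Fin k → EuclideanSpace ℝ (Fin d))
    (hβ : Function.Injective β) :
    HasDerivAt
      (fun t : ℝ =>
        kmeansObj d k (ballMixDensity d k βstar r) (fun i => β i + t • v i))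
      (-∑ i : Fin k,
        ∫ x in voronoi d k β i,
          2 * ⟪v i, x - β i⟫ * ballMixDensity d k βstar r x)
      0 :=
  hasDerivAt_integral_iInf_norm_sub_smul_sq_mul volume
    (by simpa using integrable_mul_ballMixDensity βstar r continuous_const (g := fun _ => 1))
    (integrable_mul_ballMixDensity βstar r (by fun_prop)) hβ v

/-- Directional derivative of the population k-means objective: for a solution `β` with
pairwise distinct components and any direction `v`, the map `t ↦ G(β + t v)` is
differentiable at `t = 0` with derivative `−Σ_i ∫_{V_i(β)} 2⟨v_i, x − β_i⟩ f(x) dx`. -/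
theorem directional_derivative_kmeans (d k : ℕ) (hd : 1 ≤ d) (hk : 2 ≤ k)
    (βstar : Fin k → EuclideanSpace ℝ (Fin d)) (hinj : Function.Injective βstar)
    (r : ℝ) (hr : 0 < r)
    (hdisj : Pairwise fun s s' : Fin k =>
      Disjoint (Metric.closedBall (βstar s) r) (Metric.closedBall (βstar s') r))
    (β v : Fin k → EuclideanSpace ℝ (Fin d))
    (hβ : Function.Injective β) :
    HasDerivAt
      (fun t : ℝ =>
        kmeansObj d k (ballMixDensity d k βstar r) (fun i => β i + t • v i))
      (-∑ i : Fin k,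
        ∫ x in voronoi d k β i,
          2 * ⟪v i, x - β i⟫ * ballMixDensity d k βstar r x)
      0 :=
  directional_derivative_kmeans_general d k βstar r β v hβ
end
end
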